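/- arXiv:1104.1885 — 4 statements merged into one kernel-verified Lean document; each statement's English description precedes it below -/
import Mathlib

section
/- For every B ⊆ {1,…,N}, the following conditions are equivalent: (i) the cone c(Φ_flip^B) of nonnegative linear combinations of the flipped sequence Φ_flip^B is salient (contains no line); (ii) the closure of the semi-closed quadrant Q_neg^B meets V only in the point 0; (iii) for every λ ∈ F, the set V(Φ,λ) ∩ closure(Q_neg^B) is bounded. -/
open scoped Pointwise
open Classical MvPolynomial

noncomputable section

namespace AC

section Defs

variable {E : Type*} [AddCommGroup E] [Module ℝ E]
variable {ι : Type*} [Fintype ι] [DecidableEq ι]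

/-- Characteristic function of a set, with values in `ℝ`. -/
def charFn {α : Type*} (s : Set α) (x : α) : ℝ := if x ∈ s then 1 else 0

/-- The cone of nonnegative linear combinations of `{Ψ i : i ∈ I}`. -/
def coneOf (Ψ : ι → E) (I : Set ι) : Set E :=
  {v | ∃ c : ι → ℝ, (∀ i, 0 ≤ c i) ∧ (∀ i, i ∉ I → c i = 0) ∧ v = ∑ i, c i • Ψ i}

/-- The cone of nonnegative linear combinations of all the `Ψ i`. -/
def fullCone (Ψ : ι → E) : Set E := coneOf Ψ Set.univ

/-- A cone is salient if it contains no line, i.e. `v, -v ∈ C → v = 0`. -/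
def Salient (C : Set E) : Prop := ∀ v ∈ C, -v ∈ C → v = 0

/-- A wall: a hyperplane spanned by `dim E - 1` linearly independent members of `Ψ`. -/
def IsWall (Ψ : ι → E) (H : Submodule ℝ E) : Prop :=
  ∃ S : Finset ι, S.card + 1 = Module.finrank ℝ E ∧
    LinearIndependent ℝ (fun i : {x // x ∈ S} => Ψ i.1) ∧
    H = Submodule.span ℝ (Ψ '' ↑S)

/-- An element is regular when it lies on no wall. -/
def IsRegular (Ψ : ι → E) (μ : E) : Prop :=
  ∀ H : Submodule ℝ E, IsWall Ψ H → μ ∉ H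

/-- `G(Ψ,τ)`: generating subsets whose cone contains `τ`. -/
def Gens (Ψ : ι → E) (τ : Set E) : Set (Finset ι) :=
  {I | Submodule.span ℝ (Ψ '' ↑I) = ⊤ ∧ τ ⊆ coneOf Ψ ↑I}

/-- `I` is basic when `{Ψ i : i ∈ I}` is a basis of `E`. -/
def IsBasic (Ψ : ι → E) (I : Finset ι) : Prop :=
  LinearIndependent ℝ (fun i : {x // x ∈ I} => Ψ i.1) ∧
    Submodule.span ℝ (Ψ '' ↑I) = ⊤

/-- `B(Ψ,τ)`: basic subsets whose cone contains `τ`. -/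
def Bases (Ψ : ι → E) (τ : Set E) : Set (Finset ι) :=
  {I | IsBasic Ψ I ∧ τ ⊆ coneOf Ψ ↑I}

/-- The combinatorial Brianchon-Gram polynomial `X(Ψ,τ)`; the variable `Sum.inl i`
plays the role of `p i` and `Sum.inr i` plays the role of `q i`. -/
def BGpoly (Ψ : ι → E) (τ : Set E) : MvPolynomial (ι ⊕ ι) ℤ :=
  ∑ I : Finset ι,
    if I ∈ Gens Ψ τ then
      (-1 : MvPolynomial (ι ⊕ ι) ℤ) ^ (I.card - Module.finrank ℝ E) *
        ((∏ j ∈ Iᶜ, X (Sum.inl j)) * ∏ i ∈ I, (X (Sum.inl i) + X (Sum.inr i)))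
    else 0

/-- The geometric Brianchon-Gram function `X_geom(Ψ,τ)` on `ℝ^ι`. -/
def XGeom (Ψ : ι → E) (τ : Set E) (x : ι → ℝ) : ℝ :=
  ∑ I : Finset ι,
    if I ∈ Gens Ψ τ then
      (-1 : ℝ) ^ (I.card - Module.finrank ℝ E) *
        ∏ j ∈ Iᶜ, (if 0 ≤ x j then (1 : ℝ) else 0)
    else 0

/-- The affine subspace `V(Ψ,λ)`. -/
def affSlice (Ψ : ι → E) (lam : E) : Set (ι → ℝ) := {x | ∑ i, x i • Ψ i = lam}

/-- The partition polytope `p(Ψ,λ)`. -/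
def partPoly (Ψ : ι → E) (lam : E) : Set (ι → ℝ) :=
  {x | (∀ i, 0 ≤ x i) ∧ ∑ i, x i • Ψ i = lam}

/-- The semi-closed quadrant `Q_neg^B`. -/
def Qneg (B : Finset ι) : Set (ι → ℝ) :=
  {x | (∀ i ∈ B, x i < 0) ∧ ∀ i ∉ B, 0 ≤ x i}

/-- The flipped sequence `Ψ_flip^B`. -/
def flipSeq (Ψ : ι → E) (B : Finset ι) : ι → E := fun i => if i ∈ B then -Ψ i else Ψ i

/-- The zonotope `b(Ψ)`. -/
def zonotope (Ψ : ι → E) : Set E :=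
  {v | ∃ t : ι → ℝ, (∀ i, 0 ≤ t i ∧ t i ≤ 1) ∧ v = ∑ i, t i • Ψ i}

/-- `x ∈ ℝ^ι` is a lattice point when all its coordinates are integers. -/
def isLatticePt (x : ι → ℝ) : Prop := ∀ i, ∃ n : ℤ, x i = (n : ℝ)

/-- `v` lies in the open side of the hyperplane `H` containing `τ`. -/
def InOpenSideOf (H : Submodule ℝ E) (τ : Set E) (v : E) : Prop :=
  ∃ ξ : E →ₗ[ℝ] ℝ, (∀ h ∈ H, ξ h = 0) ∧ (∀ μ ∈ τ, 0 < ξ μ) ∧ 0 < ξ v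

/-- The change of variables exchanging `p i` and `q i` for `i ∈ A`. -/
def flipVar (A : Finset ι) : ι ⊕ ι → ι ⊕ ι
  | Sum.inl i => if i ∈ A then Sum.inr i else Sum.inl i
  | Sum.inr i => if i ∈ A then Sum.inl i else Sum.inr i

/-- The ring map `Flip_A`, exchanging `p i` and `q i` for `i ∈ A`. -/
def FlipPoly (A : Finset ι) (P : MvPolynomial (ι ⊕ ι) ℤ) : MvPolynomial (ι ⊕ ι) ℤ :=
  MvPolynomial.rename (flipVar A) P

/-- Value substituted for the variable `p i` in the substitution `Geom_A`. -/
def geomValA (A : Finset ι) (x : ι → ℝ) : ι → ℝ := fun i =>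
  if i ∈ A then (if 0 < x i then 1 else 0) else (if 0 ≤ x i then 1 else 0)

/-- The substitution `Geom_A`: substitute `1 - p i` for `q i`, then `[x i ≥ 0]`
for `p i` if `i ∉ A`, and `[x i > 0]` for `p i` if `i ∈ A`. -/
def GeomA (A : Finset ι) (P : MvPolynomial (ι ⊕ ι) ℤ) (x : ι → ℝ) : ℝ :=
  MvPolynomial.aeval (Sum.elim (geomValA A x) (fun i => 1 - geomValA A x i)) P

/-- The substitution `Geom`: `[x i ≥ 0]` for `p i`, `[x i < 0]` for `q i`. -/
def Geom (P : MvPolynomial (ι ⊕ ι) ℤ) (x : ι → ℝ) : ℝ := GeomA ∅ P x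

/-- The semi-closed flipped partition polytope `p_flip(Ψ,A,λ)`. -/
def pflip (Ψ : ι → E) (A : Finset ι) (lam : E) : Set (ι → ℝ) :=
  {x | (∑ i, x i • Ψ i = lam) ∧ (∀ i ∈ A, x i < 0) ∧ ∀ i ∉ A, 0 ≤ x i}

/-- The linear map `x ↦ ∑ i, x i • Ψ i`. -/
def Mmap (Ψ : ι → E) : (ι → ℝ) →ₗ[ℝ] E where
  toFun x := ∑ i, x i • Ψ i
  map_add' x y := by simp [add_smul, Finset.sum_add_distrib]
  map_smul' c x := by simp [smul_smul, Finset.smul_sum]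

/-- A polynomial function on a finite-dimensional real vector space. -/
def IsPolynomialFun {W : Type*} [AddCommGroup W] [Module ℝ W] (f : W → ℝ) : Prop :=
  ∃ (n : ℕ) (b : Module.Basis (Fin n) ℝ W) (p : MvPolynomial (Fin n) ℝ),
    ∀ v, f v = MvPolynomial.eval (fun i => b.repr v i) p

/-- `Λ` is a (full) lattice in `W`: the ℤ-span of some ℝ-basis. -/
def IsLattice {W : Type*} [AddCommGroup W] [Module ℝ W] (Λ : AddSubgroup W) : Prop :=
  ∃ b : Module.Basis (Fin (Module.finrank ℝ W)) ℝ W,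
    ∀ v, v ∈ Λ ↔ ∀ i, ∃ n : ℤ, b.repr v i = (n : ℝ)

/-- Quasi-polynomial function on the lattice `Λ`: polynomial on each coset of
a finite-index sublattice (here `D • Λ`). -/
def IsQuasiPolynomialOn {W : Type*} [AddCommGroup W] [Module ℝ W]
    (Λ : AddSubgroup W) (f : W → ℝ) : Prop :=
  ∃ D : ℕ, 0 < D ∧ ∀ lam₀ ∈ Λ, ∃ P : W → ℝ, IsPolynomialFun P ∧
    ∀ lam' ∈ Λ, f (lam₀ + D • lam') = P (lam₀ + D • lam')

end Defs

section Topes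

variable {E : Type*} [AddCommGroup E] [Module ℝ E] [TopologicalSpace E]
variable {ι : Type*} [Fintype ι]

/-- A tope: a connected component of the set of regular elements. -/
def IsTope (Ψ : ι → E) (τ : Set E) : Prop :=
  ∃ μ, IsRegular Ψ μ ∧ τ = connectedComponentIn {x | IsRegular Ψ x} μ

/-- Two topes are adjacent along the wall `H` when the intersection of their
closures is contained in `H` and spans `H`. -/
def Adjacent (Ψ : ι → E) (τ₁ τ₂ : Set E) (H : Submodule ℝ E) : Prop :=
  IsTope Ψ τ₁ ∧ IsTope Ψ τ₂ ∧ τ₁ ≠ τ₂ ∧ IsWall Ψ H ∧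
    closure τ₁ ∩ closure τ₂ ⊆ (H : Set E) ∧
    Submodule.span ℝ (closure τ₁ ∩ closure τ₂) = H

end Topes

/-!
Flipping the signs of the coordinates in `B` carries `closure (Qneg B)` onto the nonnegative
orthant and turns relations of `Φ` into relations of `flipSeq Φ B`; so (ii) says that
`flipSeq Φ B` has no nonzero nonnegative relation, which, as no `Φ i` vanishes, is salience of
its cone. For (ii) ↔ (iii): `closure (Qneg B)` is a closed cone, so compactness of its unit
sphere gives `m * ‖x‖ ≤ ‖∑ i, x i • Φ i‖` on it for some `m > 0` as soon as it meets `V` only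
in `0`; conversely a nonzero point of the intersection spans a ray inside `V(Φ,0)`.
-/

section Cones

variable {E : Type*} [AddCommGroup E] [Module ℝ E] {ι : Type*} [Fintype ι]

theorem mem_fullCone {Ψ : ι → E} {v : E} :
    v ∈ fullCone Ψ ↔ ∃ c : ι → ℝ, 0 ≤ c ∧ v = ∑ i, c i • Ψ i := by
  simp [fullCone, coneOf, Pi.le_def]

theorem salient_fullCone_iff [DecidableEq ι] {Ψ : ι → E} (hΨ : ∀ i, Ψ i ≠ 0) :
    Salient (fullCone Ψ) ↔ ∀ c : ι → ℝ, 0 ≤ c → ∑ i, c i • Ψ i = 0 → c = 0 := by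
  constructor
  · intro hsal c hc hrel
    funext j
    have hpos : c j • Ψ j ∈ fullCone Ψ :=
      mem_fullCone.2 ⟨Pi.single j (c j), Pi.single_nonneg.2 (hc j), by simp [Pi.single_apply]⟩
    have hneg : -(c j • Ψ j) ∈ fullCone Ψ := by
      refine mem_fullCone.2 ⟨c - Pi.single j (c j), fun i => ?_, ?_⟩
      · by_cases hij : i = j
        · simp [hij]
        · simpa [hij] using hc i
      · simp [sub_smul, Finset.sum_sub_distrib, hrel, Pi.single_apply]
    exact (smul_eq_zero.1 (hsal _ hpos hneg)).resolve_right (hΨ j)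
  · intro hker v hv hnv
    obtain ⟨c, hc, rfl⟩ := mem_fullCone.1 hv
    obtain ⟨d, hd, hd'⟩ := mem_fullCone.1 hnv
    have hcd : c + d = 0 :=
      hker _ (add_nonneg hc hd) (by simp [add_smul, Finset.sum_add_distrib, ← hd'])
    have hc0 : c = 0 := le_antisymm (eq_neg_of_add_eq_zero_left hcd ▸ neg_nonpos.2 hd) hc
    simp [hc0]

end Cones

section SignFlip

variable {E : Type*} [AddCommGroup E] {ι : Type*} [DecidableEq ι]

def signFlip (B : Finset ι) (x : ι → ℝ) : ι → ℝ := fun i => if i ∈ B then -x i else x i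

theorem signFlip_involutive (B : Finset ι) : Function.Involutive (signFlip B) := by
  intro x
  funext i
  by_cases hi : i ∈ B <;> simp [signFlip, hi]

theorem signFlip_zero (B : Finset ι) : signFlip B 0 = 0 := by
  funext i
  simp [signFlip]

theorem signFlip_smul (B : Finset ι) (t : ℝ) (x : ι → ℝ) :
    signFlip B (t • x) = t • signFlip B x := by
  funext i
  by_cases hi : i ∈ B <;> simp [signFlip, hi]

theorem sum_signFlip_smul_flipSeq [Module ℝ E] [Fintype ι] (Ψ : ι → E) (B : Finset ι)
    (x : ι → ℝ) :
    ∑ i, signFlip B x i • flipSeq Ψ B i = ∑ i, x i • Ψ i := by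
  refine Finset.sum_congr rfl fun i _ => ?_
  by_cases hi : i ∈ B <;> simp [signFlip, flipSeq, hi]

theorem flipSeq_ne_zero {Ψ : ι → E} (hΨ : ∀ i, Ψ i ≠ 0) (B : Finset ι) (i : ι) :
    flipSeq Ψ B i ≠ 0 := by
  by_cases hi : i ∈ B <;> simp [flipSeq, hi, hΨ i]

theorem closure_Qneg (B : Finset ι) : closure (Qneg B) = {x | 0 ≤ signFlip B x} := by
  have hpi : Qneg B = Set.univ.pi fun i => if i ∈ B then Set.Iio 0 else Set.Ici 0 := by
    ext x
    simp only [Qneg, Set.mem_pi, Set.mem_univ, true_implies]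
    exact ⟨fun ⟨hB, hBc⟩ i => by split_ifs with hi; exacts [hB i hi, hBc i hi],
      fun hx => ⟨fun i hi => by simpa [hi] using hx i, fun i hi => by simpa [hi] using hx i⟩⟩
  rw [hpi, closure_pi_set]
  ext x
  simp only [apply_ite closure, closure_Iio, closure_Ici, Set.mem_pi, Set.mem_univ,
    true_implies, Set.mem_ofPred_eq, Pi.le_def]
  refine forall_congr' fun i => ?_
  by_cases hi : i ∈ B <;> simp [signFlip, hi]

theorem smul_mem_closure_Qneg {B : Finset ι} {x : ι → ℝ} (hx : x ∈ closure (Qneg B)) {t : ℝ}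
    (ht : 0 ≤ t) : t • x ∈ closure (Qneg B) := by
  rw [closure_Qneg] at hx ⊢
  simpa [signFlip_smul] using smul_nonneg ht hx

theorem forall_mem_closure_Qneg_iff [Module ℝ E] [Fintype ι] (Ψ : ι → E) (B : Finset ι) :
    (∀ x ∈ closure (Qneg B), ∑ i, x i • Ψ i = 0 → x = 0) ↔
      ∀ c : ι → ℝ, 0 ≤ c → ∑ i, c i • flipSeq Ψ B i = 0 → c = 0 := by
  rw [Iff.comm, (signFlip_involutive B).surjective.forall]
  simp only [closure_Qneg, Set.mem_ofPred_eq, sum_signFlip_smul_flipSeq,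
    (signFlip_involutive B).injective.eq_iff' (signFlip_zero B)]

end SignFlip

section BoundedSlices

variable {V W : Type*} [NormedAddCommGroup V] [NormedSpace ℝ V] [FiniteDimensional ℝ V]
  [NormedAddCommGroup W] [NormedSpace ℝ W] {K : Set V}

theorem exists_pos_mul_norm_le_norm_apply (hK : IsClosed K)
    (hsmul : ∀ x ∈ K, ∀ t : ℝ, 0 ≤ t → t • x ∈ K) (L : V →ₗ[ℝ] W)
    (hker : ∀ x ∈ K, L x = 0 → x = 0) : ∃ m > 0, ∀ x ∈ K, m * ‖x‖ ≤ ‖L x‖ := by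
  have hcpt : IsCompact (Metric.sphere 0 1 ∩ K) := (isCompact_sphere 0 1).inter_right hK
  obtain ⟨m, hm, hmL⟩ := hcpt.exists_forall_le' L.continuous_of_finiteDimensional.norm.continuousOn
    (a := 0) fun x hx => norm_pos_iff.2 fun hLx => by
      simp [hker x hx.2 hLx] at hx
  refine ⟨m, hm, fun x hx => ?_⟩
  rcases eq_or_ne x 0 with rfl | hx0
  · simp
  have hnorm : 0 < ‖x‖ := norm_pos_iff.2 hx0
  have hunit := hmL (‖x‖⁻¹ • x)
    ⟨by simp [norm_smul, hnorm.ne'], hsmul x hx _ (inv_nonneg.2 hnorm.le)⟩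
  rw [map_smul, norm_smul, norm_inv, norm_norm, le_inv_mul_iff₀ hnorm] at hunit
  linarith

theorem forall_mem_ker_eq_zero_iff_isBounded (hK : IsClosed K)
    (hsmul : ∀ x ∈ K, ∀ t : ℝ, 0 ≤ t → t • x ∈ K) (L : V →ₗ[ℝ] W) :
    (∀ x ∈ K, L x = 0 → x = 0) ↔ ∀ w, Bornology.IsBounded (L ⁻¹' {w} ∩ K) := by
  constructor
  · intro hker w
    obtain ⟨m, hm, hmL⟩ := exists_pos_mul_norm_le_norm_apply hK hsmul L hker
    refine isBounded_iff_forall_norm_le.2 ⟨‖w‖ / m, fun x ⟨hxw, hxK⟩ => ?_⟩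
    rw [le_div_iff₀ hm, mul_comm]
    simpa [show L x = w from hxw] using hmL x hxK
  · intro hbdd x hxK hLx
    by_contra hx0
    obtain ⟨C, hC⟩ := isBounded_iff_forall_norm_le.1 (hbdd 0)
    have hnorm : 0 < ‖x‖ := norm_pos_iff.2 hx0
    have hfar := hC (((|C| + 1) / ‖x‖) • x) ⟨by simp [hLx], hsmul x hxK _ (by positivity)⟩
    rw [norm_smul, Real.norm_of_nonneg (by positivity), div_mul_cancel₀ _ hnorm.ne'] at hfar
    linarith [le_abs_self C]

end BoundedSlices

theorem salient_tfae_general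
    {F : Type*} [NormedAddCommGroup F] [NormedSpace ℝ F]
    {N : ℕ} (Φ : Fin N → F)
    (hne : ∀ i, Φ i ≠ 0)
    (B : Finset (Fin N)) :
    (Salient (fullCone (flipSeq Φ B)) ↔
        closure (Qneg B) ∩ {x : Fin N → ℝ | ∑ i, x i • Φ i = 0} = {0}) ∧
    ((closure (Qneg B) ∩ {x : Fin N → ℝ | ∑ i, x i • Φ i = 0} = {0}) ↔
        ∀ lam : F, Bornology.IsBounded (affSlice Φ lam ∩ closure (Qneg B))) := by
  have hzero : (0 : Fin N → ℝ) ∈ closure (Qneg B) ∩ {x | ∑ i, x i • Φ i = 0} :=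
    ⟨by simp [closure_Qneg, signFlip_zero], by simp⟩
  have hker : closure (Qneg B) ∩ {x : Fin N → ℝ | ∑ i, x i • Φ i = 0} = {0} ↔
      ∀ x ∈ closure (Qneg B), Mmap Φ x = 0 → x = 0 := by
    simp only [Set.eq_singleton_iff_unique_mem, hzero, true_and, Set.mem_inter_iff, and_imp]
    rfl
  rw [hker]
  exact ⟨(salient_fullCone_iff (flipSeq_ne_zero hne B)).trans
      (forall_mem_closure_Qneg_iff Φ B).symm,
    forall_mem_ker_eq_zero_iff_isBounded isClosed_closure
      (fun _ hx _ ht => smul_mem_closure_Qneg hx ht) (Mmap Φ)⟩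

/-- Equivalence of salience of the flipped cone, triviality of
`closure(Q_neg^B) ∩ V`, and boundedness of `V(Φ,λ) ∩ closure(Q_neg^B)`. -/
theorem salient_tfae
    {F : Type*} [NormedAddCommGroup F] [NormedSpace ℝ F] [FiniteDimensional ℝ F]
    {N : ℕ} (Φ : Fin N → F)
    (hne : ∀ i, Φ i ≠ 0)
    (hgen : Submodule.span ℝ (Set.range Φ) = ⊤)
    (hsal : ∃ a : F →ₗ[ℝ] ℝ, ∀ i, 0 < a (Φ i))
    (B : Finset (Fin N)) :
    (Salient (fullCone (flipSeq Φ B)) ↔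
        closure (Qneg B) ∩ {x : Fin N → ℝ | ∑ i, x i • Φ i = 0} = {0}) ∧
    ((closure (Qneg B) ∩ {x : Fin N → ℝ | ∑ i, x i • Φ i = 0} = {0}) ↔
        ∀ lam : F, Bornology.IsBounded (affSlice Φ lam ∩ closure (Qneg B))) :=
  salient_tfae_general Φ hne B

end AC
end
end

section
/- Let τ ⊆ c(Φ) be a Φ-tope and B ⊆ {1,…,N}. Assume the semi-open cone c̃(Φ_flip^B) = {Σ_i x_i φ_i : x ∈ Q_neg^B} is disjoint from τ. Then: (i) τ is disjoint from the closed cone c(Φ_flip^B) of nonnegative linear combinations of Φ_flip^B; (ii) the closure of τ is disjoint from c̃(Φ_flip^B); (iii) τ − b(Φ) is disjoint from c̃_ℤ(Φ_flip^B) = {Σ_i x_i φ_i : x ∈ Q_neg^B ∩ ℤ^N}. -/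
open scoped Pointwise
open Classical MvPolynomial

noncomputable section

namespace AC

/-!
A tope is cut out by finitely many open half-spaces, one for each wall, so it is open and convex.
(i) If `v ∈ τ` has coefficients `x` with `x_i ≤ 0` on `B` and `x_i ≥ 0` off `B`, then subtracting
`ε` from the coefficients in `B` lands in `Q_neg^B`, while `v - ε ∑_{i ∈ B} φ_i` stays in the open
set `τ` for small `ε > 0`.
(ii) From a point `λ = ∑ x_i φ_i` of the closure, move towards a point `μ = ∑ y_i φ_i` of `τ` with
`y ≥ 0`: for small `t > 0` the coefficients `x + t (y - x)` stay in `Q_neg^B`, and by convexity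
`λ + t (μ - λ)` lies in `τ`.
(iii) Negative integers are `≤ -1`, so adding coefficients in `[0, 1]` to a lattice point of
`Q_neg^B` keeps them `≤ 0` on `B`; hence `τ - b(Φ)` meeting `c̃_ℤ(Φ_flip^B)` would make `τ` meet
`c(Φ_flip^B)`, contradicting (i).
-/

open Filter Topology

theorem connectedComponentIn_setOf_forall_ne_zero {E : Type*} [AddCommGroup E] [Module ℝ E]
    [TopologicalSpace E] [ContinuousAdd E] [ContinuousSMul ℝ E] {κ : Type*}
    (ξ : κ → E →L[ℝ] ℝ) {μ : E}
    (hμ : ∀ k, ξ k μ ≠ 0) :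
    connectedComponentIn {x | ∀ k, ξ k x ≠ 0} μ = ⋂ k, {x | 0 < (ξ k μ • ξ k) x} := by
  have hhalf : ∀ k, IsOpen {x | 0 < (ξ k μ • ξ k) x} ∧ Convex ℝ {x | 0 < (ξ k μ • ξ k) x} :=
    fun k => ⟨isOpen_lt continuous_const (map_continuous _),
      convex_halfSpace_gt (ξ k μ • ξ k : E →ₗ[ℝ] ℝ).isLinear 0⟩
  have hμT : μ ∈ ⋂ k, {x | 0 < (ξ k μ • ξ k) x} :=
    Set.mem_iInter.2 fun k => by simpa using mul_self_pos.2 (hμ k)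
  refine subset_antisymm (Set.subset_iInter fun k => ?_) ?_
  · have hdisj : Disjoint {x | 0 < (ξ k μ • ξ k) x} {x | (ξ k μ • ξ k) x < 0} :=
      Set.disjoint_left.2 fun x h₁ (h₂ : (ξ k μ • ξ k) x < 0) => lt_asymm h₁ h₂
    refine isPreconnected_connectedComponentIn.subset_left_of_subset_union (hhalf k).1
      (isOpen_lt (map_continuous _) continuous_const) hdisj ?_
      ⟨μ, mem_connectedComponentIn hμ, Set.mem_iInter.1 hμT k⟩
    intro x hx
    have hx0 : (ξ k μ • ξ k) x ≠ 0 := by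
      simpa using ⟨hμ k, connectedComponentIn_subset _ _ hx k⟩
    exact (lt_or_gt_of_ne hx0).symm
  · refine (convex_iInter fun k => (hhalf k).2).isPreconnected.subset_connectedComponentIn hμT
      fun x hx k h0 => ?_
    simpa [h0] using Set.mem_iInter.1 hx k

theorem Submodule.exists_ker_eq_of_finrank_add_one {K V : Type*} [Field K] [AddCommGroup V]
    [Module K V] [FiniteDimensional K V] (H : Submodule K V)
    (hH : Module.finrank K H + 1 = Module.finrank K V) :
    ∃ ξ : Module.Dual K V, LinearMap.ker ξ = H := by
  have hHtop : H ≠ ⊤ := fun h => by rw [h, finrank_top] at hH; omega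
  obtain ⟨ξ, hξ0, hle⟩ := H.exists_le_ker_of_lt_top hHtop.lt_top
  have hker : Module.finrank K (LinearMap.ker ξ) < Module.finrank K V :=
    Submodule.finrank_lt (by rwa [Ne, LinearMap.ker_eq_top])
  exact ⟨ξ, (Submodule.eq_of_le_of_finrank_eq hle
    (le_antisymm (Submodule.finrank_mono hle) (by omega))).symm⟩

section Walls

variable {E : Type*} [AddCommGroup E] [Module ℝ E] {ι : Type*} {Ψ : ι → E}

theorem IsWall.exists_ker_eq [FiniteDimensional ℝ E] {H : Submodule ℝ E} (hH : IsWall Ψ H) :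
    ∃ ξ : Module.Dual ℝ E, LinearMap.ker ξ = H := by
  obtain ⟨S, hcard, hli, rfl⟩ := hH
  refine Submodule.exists_ker_eq_of_finrank_add_one _ ?_
  rw [show Ψ '' ↑S = Set.range fun i : {x // x ∈ S} => Ψ i from Set.image_eq_range _ _,
    finrank_span_eq_card hli, Fintype.card_coe, hcard]

theorem finite_setOf_isWall [Finite ι] (Ψ : ι → E) : {H | IsWall Ψ H}.Finite :=
  (Set.finite_range fun S : Finset ι => Submodule.span ℝ (Ψ '' ↑S)).subset
    fun _ ⟨S, _, _, hS⟩ => ⟨S, hS.symm⟩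

end Walls

section Topes

variable {F : Type*} [NormedAddCommGroup F] [NormedSpace ℝ F] [FiniteDimensional ℝ F]
  {ι : Type*} [Fintype ι] {Ψ : ι → F}

theorem IsTope.isOpen_convex_nonempty {τ : Set F} (hτ : IsTope Ψ τ) :
    IsOpen τ ∧ Convex ℝ τ ∧ τ.Nonempty := by
  obtain ⟨μ, hμ, rfl⟩ := hτ
  have : Finite {H // IsWall Ψ H} := (finite_setOf_isWall Ψ).to_subtype
  choose ξ hξ using fun H : {H // IsWall Ψ H} => H.2.exists_ker_eq
  have hreg : ∀ x, IsRegular Ψ x ↔ ∀ H, (ξ H).toContinuousLinearMap x ≠ 0 := fun x => by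
    simp only [IsRegular, Subtype.forall, LinearMap.coe_toContinuousLinearMap', ne_eq,
      ← LinearMap.mem_ker, hξ]
  have hR : {x | IsRegular Ψ x} = {x | ∀ H, (ξ H).toContinuousLinearMap x ≠ 0} := Set.ext hreg
  rw [hR, connectedComponentIn_setOf_forall_ne_zero _ ((hreg μ).1 hμ)]
  refine ⟨isOpen_iInter_of_finite fun H => isOpen_lt continuous_const (map_continuous _),
    convex_iInter fun H => convex_halfSpace_gt (LinearMap.isLinear _) 0,
    μ, Set.mem_iInter.2 fun H => ?_⟩
  simpa using mul_self_pos.2 ((hreg μ).1 hμ H)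

end Topes

theorem eventually_add_smul_sub_mem_Qneg {ι : Type*} (B : Finset ι) {x y : ι → ℝ}
    (hx : x ∈ Qneg B) (hy : 0 ≤ y) :
    ∀ᶠ t in 𝓝[>] (0 : ℝ), x + t • (y - x) ∈ Qneg B := by
  have hB : ∀ i ∈ B, ∀ᶠ t in 𝓝[>] (0 : ℝ), x i + t * (y i - x i) < 0 := fun i hi => by
    refine Tendsto.eventually_lt_const (hx.1 i hi) (Tendsto.mono_left ?_ nhdsWithin_le_nhds)
    have hcont : Continuous fun t : ℝ => x i + t * (y i - x i) := by fun_prop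
    exact hcont.tendsto' 0 (x i) (by simp)
  filter_upwards [(eventually_all_finset B).2 hB, Ioc_mem_nhdsGT one_pos] with t htB ⟨ht0, ht1⟩
  refine ⟨htB, fun i hi => ?_⟩
  have hxi := hx.2 i hi
  have hyi : 0 ≤ y i := hy i
  simp only [Pi.add_apply, Pi.smul_apply, Pi.sub_apply, smul_eq_mul]
  nlinarith [mul_nonneg (sub_nonneg.2 ht1) hxi, mul_nonneg ht0.le hyi]

section FlippedCones

variable {E : Type*} [AddCommGroup E] [Module ℝ E] {ι : Type*} [Fintype ι] [DecidableEq ι]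
  (Ψ : ι → E) (B : Finset ι)

theorem sum_smul_flipSeq (c : ι → ℝ) :
    ∑ i, c i • flipSeq Ψ B i = Mmap Ψ fun i => if i ∈ B then -c i else c i :=
  Finset.sum_congr rfl fun i _ => by by_cases hi : i ∈ B <;> simp [flipSeq, hi]

theorem mem_fullCone_flipSeq_iff {v : E} :
    v ∈ fullCone (flipSeq Ψ B) ↔
      ∃ x : ι → ℝ, ((∀ i ∈ B, x i ≤ 0) ∧ ∀ i ∉ B, 0 ≤ x i) ∧ Mmap Ψ x = v := by
  constructor
  · rintro ⟨c, hc, -, rfl⟩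
    refine ⟨_, ⟨fun i hi => ?_, fun i hi => ?_⟩, (sum_smul_flipSeq Ψ B c).symm⟩ <;>
      simp [hi, hc i]
  · rintro ⟨x, ⟨hB, hnB⟩, rfl⟩
    refine ⟨fun i => if i ∈ B then -x i else x i, fun i => ?_, fun i hi => (hi trivial).elim, ?_⟩
    · by_cases hi : i ∈ B
      · simpa [hi] using hB i hi
      · simpa [hi] using hnB i hi
    · rw [sum_smul_flipSeq]
      congr 1
      ext i
      split_ifs <;> simp

theorem disjoint_sub_zonotope_image_Qneg_lattice {τ : Set E}
    (h : Disjoint τ (fullCone (flipSeq Ψ B))) :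
    Disjoint (τ - zonotope Ψ) (Mmap Ψ '' (Qneg B ∩ {x | isLatticePt x})) := by
  rw [Set.disjoint_left]
  rintro _ ⟨a, ha, _, ⟨t, ht, rfl⟩, rfl⟩ ⟨x, ⟨⟨hB, hnB⟩, hx⟩, hxa⟩
  refine h.ne_of_mem ha ((mem_fullCone_flipSeq_iff Ψ B).2 ⟨x + t, ⟨fun i hi => ?_,
    fun i hi => add_nonneg (hnB i hi) (ht i).1⟩, ?_⟩) rfl
  · obtain ⟨n, hn⟩ := hx i
    have hn0 : n < 0 := by exact_mod_cast hn ▸ hB i hi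
    have hn1 : (n : ℝ) ≤ -1 := by exact_mod_cast (show n ≤ -1 by omega)
    simpa [hn] using add_le_add hn1 (ht i).2
  · rw [map_add, hxa]
    exact sub_add_cancel a _

variable [TopologicalSpace E] {τ : Set E}

theorem disjoint_fullCone_flipSeq [ContinuousSub E] [ContinuousSMul ℝ E] (hτ : IsOpen τ)
    (hdisj : Disjoint (Mmap Ψ '' Qneg B) τ) : Disjoint τ (fullCone (flipSeq Ψ B)) := by
  rw [Set.disjoint_left]
  rintro _ hv hvC
  obtain ⟨x, ⟨hB, hnB⟩, rfl⟩ := (mem_fullCone_flipSeq_iff Ψ B).1 hvC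
  set e : ι → ℝ := fun i => if i ∈ B then 1 else 0
  have hlim : Tendsto (fun ε : ℝ => Mmap Ψ (x - ε • e)) (𝓝[>] 0) (𝓝 (Mmap Ψ x)) := by
    have h0 : Tendsto (fun ε : ℝ => Mmap Ψ x - ε • Mmap Ψ e) (𝓝 0)
        (𝓝 (Mmap Ψ x - (0 : ℝ) • Mmap Ψ e)) :=
      tendsto_const_nhds.sub (tendsto_id.smul_const _)
    rw [zero_smul, sub_zero] at h0
    simpa only [map_sub, map_smul] using h0.mono_left nhdsWithin_le_nhds
  obtain ⟨ε, hετ, hε⟩ := ((hlim.eventually (hτ.mem_nhds hv)).and self_mem_nhdsWithin).exists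
  refine hdisj.ne_of_mem ⟨x - ε • e, ⟨fun i hi => ?_, fun i hi => ?_⟩, rfl⟩ hετ rfl
  · simpa [e, hi] using (hB i hi).trans_lt (lt_add_of_pos_right _ hε)
  · simpa [e, hi] using hnB i hi

end FlippedCones

theorem disjoint_closure_image_Qneg {E : Type*} [AddCommGroup E] [Module ℝ E]
    [TopologicalSpace E] [IsTopologicalAddGroup E] [ContinuousConstSMul ℝ E]
    {ι : Type*} [Fintype ι] (Ψ : ι → E) (B : Finset ι)
    {τ : Set E} (hτo : IsOpen τ) (hτc : Convex ℝ τ) {μ : E} (hμ : μ ∈ τ) (hμc : μ ∈ fullCone Ψ)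
    (hdisj : Disjoint (Mmap Ψ '' Qneg B) τ) : Disjoint (closure τ) (Mmap Ψ '' Qneg B) := by
  rw [Set.disjoint_left]
  rintro _ hlam ⟨x, hx, rfl⟩
  obtain ⟨y, hy, -, hμy⟩ := hμc
  replace hμy : Mmap Ψ y = μ := hμy.symm
  subst hμy
  obtain ⟨t, htQ, ht⟩ :=
    ((eventually_add_smul_sub_mem_Qneg B hx hy).and (Ioc_mem_nhdsGT one_pos)).exists
  have hmem := hτc.add_smul_sub_mem_interior' hlam (hτo.interior_eq ▸ hμ) ht
  rw [hτo.interior_eq] at hmem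
  refine hdisj.ne_of_mem ⟨_, htQ, rfl⟩ ?_ rfl
  simpa only [map_add, map_smul, map_sub] using hmem

theorem tope_disjoint_flipped_cone_general
    {F : Type*} [NormedAddCommGroup F] [NormedSpace ℝ F] [FiniteDimensional ℝ F]
    {N : ℕ} (Φ : Fin N → F)
    (τ : Set F) (hτ : IsTope Φ τ) (hτc : τ ⊆ fullCone Φ)
    (B : Finset (Fin N))
    (hdisj : Disjoint ((fun x : Fin N → ℝ => ∑ i, x i • Φ i) '' Qneg B) τ) :
    Disjoint τ (fullCone (flipSeq Φ B)) ∧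
    Disjoint (closure τ) ((fun x : Fin N → ℝ => ∑ i, x i • Φ i) '' Qneg B) ∧
    Disjoint (τ - zonotope Φ)
      ((fun x : Fin N → ℝ => ∑ i, x i • Φ i) '' (Qneg B ∩ {x | isLatticePt x})) := by
  obtain ⟨hτo, hτconv, μ, hμ⟩ := hτ.isOpen_convex_nonempty
  have hcone := disjoint_fullCone_flipSeq Φ B hτo hdisj
  exact ⟨hcone, disjoint_closure_image_Qneg Φ B hτo hτconv hμ (hτc hμ) hdisj,
    disjoint_sub_zonotope_image_Qneg_lattice Φ B hcone⟩

/-- If the semi-open cone `c̃(Φ_flip^B)` is disjoint from the tope `τ ⊆ c(Φ)`,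
then (i) `τ` is disjoint from the closed cone `c(Φ_flip^B)`, (ii) the closure
of `τ` is disjoint from `c̃(Φ_flip^B)`, and (iii) `τ - b(Φ)` is disjoint from
`c̃_ℤ(Φ_flip^B)`. -/
theorem tope_disjoint_flipped_cone
    {F : Type*} [NormedAddCommGroup F] [NormedSpace ℝ F] [FiniteDimensional ℝ F]
    {N : ℕ} (Φ : Fin N → F)
    (hne : ∀ i, Φ i ≠ 0)
    (hgen : Submodule.span ℝ (Set.range Φ) = ⊤)
    (hsal : ∃ a : F →ₗ[ℝ] ℝ, ∀ i, 0 < a (Φ i))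
    (τ : Set F) (hτ : IsTope Φ τ) (hτc : τ ⊆ fullCone Φ)
    (B : Finset (Fin N))
    (hdisj : Disjoint ((fun x : Fin N → ℝ => ∑ i, x i • Φ i) '' Qneg B) τ) :
    Disjoint τ (fullCone (flipSeq Φ B)) ∧
    Disjoint (closure τ) ((fun x : Fin N → ℝ => ∑ i, x i • Φ i) '' Qneg B) ∧
    Disjoint (τ - zonotope Φ)
      ((fun x : Fin N → ℝ => ∑ i, x i • Φ i) '' (Qneg B ∩ {x | isLatticePt x})) :=
  tope_disjoint_flipped_cone_general Φ τ hτ hτc B hdisj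

end AC
end
end

section
/- For every Φ-tope τ ⊆ c(Φ) and every Φ-regular linear form β on ℝ^N, the combinatorial Lawrence–Varchenko function equals the combinatorial Brianchon–Gram function: Y(Φ,τ,β) = X(Φ,τ) as polynomials in ℤ[p_1,…,p_N,q_1,…,q_N]. -/
/-!
Expanding `(-1) ^ |K^{c,-}_β| * ∏_{K^{c,-}_β} q_i = ∏_{K^{c,-}_β} (p_i - (p_i + q_i))` writes
the term of `Y` indexed by a basic `K` as the sum of the terms of `X` indexed by the sets `I` with
`K ⊆ I ⊆ K ∪ K^{c,-}_β`. So `Y = X` follows once, for every `I`, exactly one `K ∈ B(Φ,τ)`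
satisfies `K ⊆ I` and `⟨β, ρ_{Φ,K}(e_j)⟩ < 0` for all `j ∈ I \ K` if `I ∈ G(Φ,τ)`, and none does
otherwise.

Fix a point `μ ∈ τ`. Such a `K` is an optimal basis of the linear program maximising `β` over the
nonnegative representations of `μ` supported on `I`. It exists because that polytope is compact
(salience) and a maximiser of minimal support has linearly independent support; it is unique
because `μ`, being regular, lies in the span of no fewer than `r` vectors of `Φ`. Finally
`μ ∈ c(Φ_K)` already gives `τ ⊆ c(Φ_K)`: no regular point lies on a facet of the simplicial cone
`c(Φ_K)`, so the connected set `τ` cannot leave it.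
-/

open scoped Pointwise
open Classical MvPolynomial

noncomputable section

namespace AC

open Finset

section Basic

variable {F : Type*} [AddCommGroup F] [Module ℝ F] {ι : Type*} {Φ : ι → F}

theorem isBasic_of_card_eq [FiniteDimensional ℝ F] {K : Finset ι} (hK : LinearIndepOn ℝ Φ K)
    (hcard : #K = Module.finrank ℝ F) : IsBasic Φ K :=
  ⟨hK, by rw [Set.image_eq_range]; exact hK.span_eq_top_of_card_eq_finrank' (by simpa)⟩

namespace IsBasic

variable {K : Finset ι}

def basis (hK : IsBasic Φ K) : Module.Basis K ℝ F :=
  .mk hK.1 (by have := hK.2.ge; rwa [Set.image_eq_range] at this)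

@[simp]
theorem basis_apply (hK : IsBasic Φ K) (i : K) : hK.basis i = Φ i :=
  Module.Basis.mk_apply _ _ i

theorem card_eq (hK : IsBasic Φ K) : #K = Module.finrank ℝ F := by
  rw [Module.finrank_eq_card_basis hK.basis, Fintype.card_coe]

end IsBasic

variable [Fintype ι]

theorem coneOf_mono {I J : Finset ι} (h : I ⊆ J) : coneOf Φ I ⊆ coneOf Φ J :=
  fun _ ⟨c, hc, hcI, hv⟩ => ⟨c, hc, fun i hi => hcI i fun hiI => hi (h hiI), hv⟩

theorem sum_smul_eq_sum_of_forall_notMem {x : ι → ℝ} {K : Finset ι}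
    (hx : ∀ i ∉ K, x i = 0) : ∑ i, x i • Φ i = ∑ i ∈ K, x i • Φ i :=
  (sum_subset (subset_univ K) fun i _ hi => by rw [hx i hi, zero_smul]).symm

theorem sum_smul_mem_span_of_forall_notMem {x : ι → ℝ} {K : Finset ι}
    (hx : ∀ i ∉ K, x i = 0) : ∑ i, x i • Φ i ∈ Submodule.span ℝ (Φ '' K) := by
  rw [sum_smul_eq_sum_of_forall_notMem hx]
  exact Submodule.sum_mem _ fun i hi => Submodule.smul_mem _ _ (Submodule.subset_span ⟨i, hi, rfl⟩)

namespace IsBasic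

variable {K : Finset ι}

theorem eq_zero_of_sum_smul_eq_zero (hK : IsBasic Φ K) {x : ι → ℝ} (hx : ∀ i ∉ K, x i = 0)
    (h0 : ∑ i, x i • Φ i = 0) : x = 0 := by
  funext i
  by_cases hi : i ∈ K
  · rw [sum_smul_eq_sum_of_forall_notMem hx] at h0
    exact linearIndepOn_finset_iff.mp hK.1 x h0 i hi
  · exact hx i hi

theorem basis_repr_sum_smul (hK : IsBasic Φ K) {x : ι → ℝ} (hx : ∀ i ∉ K, x i = 0) (i : K) :
    hK.basis.repr (∑ j, x j • Φ j) i = x i := by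
  rw [sum_smul_eq_sum_of_forall_notMem hx, ← sum_coe_sort K fun j => x j • Φ j]
  simp_rw [← hK.basis_apply]
  exact congr_fun (hK.basis.repr_sum_self fun j : K => x j) i

theorem mem_coneOf_of_basis_repr_nonneg (hK : IsBasic Φ K) {v : F}
    (hv : ∀ i, 0 ≤ hK.basis.repr v i) : v ∈ coneOf Φ K := by
  classical
  refine ⟨fun i => if h : i ∈ K then hK.basis.repr v ⟨i, h⟩ else 0, fun i => ?_,
    fun i hi => dif_neg hi, ?_⟩
  · dsimp only
    split_ifs
    exacts [hv _, le_rfl]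
  · conv_lhs => rw [← hK.basis.sum_repr v]
    rw [sum_smul_eq_sum_of_forall_notMem fun i hi => dif_neg hi, ← sum_coe_sort K]
    exact sum_congr rfl fun i _ => by rw [dif_pos i.2, basis_apply]

end IsBasic

theorem IsRegular.notMem_span_of_card_lt (hgen : Submodule.span ℝ (Set.range Φ) = ⊤)
    {μ : F} (hμ : IsRegular Φ μ) {S : Finset ι} (hS : #S < Module.finrank ℝ F) :
    μ ∉ Submodule.span ℝ (Φ '' S) := by
  classical
  intro hμS
  obtain ⟨b₀, hb₀S, -, hSb₀, hb₀⟩ :=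
    exists_linearIndepOn_extension (linearIndepOn_empty ℝ Φ) (Set.empty_subset (S : Set ι))
  obtain ⟨b, -, hb₀b, hb, hbind⟩ := exists_linearIndepOn_extension hb₀ (Set.subset_univ b₀)
  have hbcard : #b.toFinset = Module.finrank ℝ F := by
    have htop : Submodule.span ℝ (Φ '' b) = ⊤ :=
      top_unique (hgen ▸ Submodule.span_le.mpr (Set.image_univ ▸ hb))
    rw [Set.toFinset_card, ← finrank_span_eq_card hbind, ← Set.image_eq_range, htop, finrank_top]
  have hb₀card : #b₀.toFinset ≤ #S := by
    simpa using card_le_card (Set.toFinset_subset_toFinset.mpr hb₀S)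
  obtain ⟨T, hb₀T, hTb, hT⟩ := exists_subsuperset_card_eq (n := Module.finrank ℝ F - 1)
    (Set.toFinset_subset_toFinset.mpr hb₀b) (by omega) (by omega)
  refine hμ _ ⟨T, by omega, hbind.mono (by simpa using hTb), rfl⟩ ?_
  refine Submodule.span_mono (Set.image_mono ?_) (Submodule.span_le.mpr hSb₀ hμS)
  simpa using hb₀T

theorem IsRegular.basis_repr_ne_zero (hgen : Submodule.span ℝ (Set.range Φ) = ⊤) {μ : F}
    (hμ : IsRegular Φ μ) {K : Finset ι} (hK : IsBasic Φ K) (i : K) : hK.basis.repr μ i ≠ 0 := by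
  intro h0
  refine hμ.notMem_span_of_card_lt hgen (S := K.erase i) (hK.card_eq ▸ card_erase_lt_of_mem i.2) ?_
  have hμ : μ ∈ Submodule.span ℝ (hK.basis '' {i}ᶜ) :=
    hK.basis.mem_span_image.mpr fun j hj hji =>
      Finsupp.mem_support_iff.mp hj (Set.mem_singleton_iff.mp hji ▸ h0)
  refine Submodule.span_mono ?_ hμ
  rintro _ ⟨j, hj, rfl⟩
  exact ⟨j, mem_erase.2 ⟨fun h => hj (Subtype.ext h), j.2⟩, (hK.basis_apply j).symm⟩

end Basic

section Tope

variable {F : Type*} [NormedAddCommGroup F] [NormedSpace ℝ F] [FiniteDimensional ℝ F]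
  {ι : Type*} [Fintype ι] {Φ : ι → F}

theorem IsRegular.connectedComponentIn_subset_coneOf (hgen : Submodule.span ℝ (Set.range Φ) = ⊤)
    {μ : F} (hμ : IsRegular Φ μ) {K : Finset ι} (hK : IsBasic Φ K) (hμK : μ ∈ coneOf Φ K) :
    connectedComponentIn {v | IsRegular Φ v} μ ⊆ coneOf Φ K := by
  have hpos (i : K) : ∀ v ∈ connectedComponentIn {v | IsRegular Φ v} μ,
      0 < hK.basis.repr v i := by
    have hcont : Continuous (hK.basis.coord i) := LinearMap.continuous_of_finiteDimensional _
    refine isPreconnected_connectedComponentIn.subset_left_of_subset_union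
      (isOpen_lt continuous_const hcont) (isOpen_lt hcont continuous_const)
      (Set.disjoint_left.2 fun v h1 h2 => lt_asymm (show 0 < hK.basis.coord i v from h1) h2)
      (fun v hv => ((connectedComponentIn_subset _ _ hv : IsRegular Φ v).basis_repr_ne_zero
        hgen hK i).lt_or_gt.symm) ⟨μ, mem_connectedComponentIn hμ, ?_⟩
    obtain ⟨c, hc, hcK, rfl⟩ := hμK
    have hne := hμ.basis_repr_ne_zero hgen hK i
    rw [hK.basis_repr_sum_smul hcK] at hne
    show 0 < hK.basis.repr _ i
    rw [hK.basis_repr_sum_smul hcK]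
    exact (hc i).lt_of_ne' hne
  exact fun v hv => hK.mem_coneOf_of_basis_repr_nonneg fun i => (hpos i v hv).le

end Tope

section Projection

variable {F : Type*} [AddCommGroup F] [Module ℝ F] {ι : Type*} [Fintype ι] [DecidableEq ι]
  {Φ : ι → F}

/-- `π` is the map `ρ_{Φ,K}`: a projection of `ℝ^ι` onto `{x | ∑ i, x i • Φ i = 0}` whose kernel
is spanned by the coordinate vectors indexed by `K`. -/
def IsProjOntoKer (Φ : ι → F) (K : Finset ι) (π : (ι → ℝ) →ₗ[ℝ] (ι → ℝ)) : Prop :=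
  ∀ x, ∑ i, π x i • Φ i = 0 ∧
    x - π x ∈ Submodule.span ℝ ((fun i => (Pi.single i 1 : ι → ℝ)) '' K)

namespace IsProjOntoKer

variable {K : Finset ι} {π : (ι → ℝ) →ₗ[ℝ] (ι → ℝ)}

theorem sum_smul_eq_zero (hπ : IsProjOntoKer Φ K π) (x : ι → ℝ) : ∑ i, π x i • Φ i = 0 :=
  (hπ x).1

theorem apply_of_notMem (hπ : IsProjOntoKer Φ K π) (x : ι → ℝ) {l : ι} (hl : l ∉ K) :
    π x l = x l := by
  have hmem := (hπ x).2
  rw [show (fun i => (Pi.single i 1 : ι → ℝ)) = Pi.basisFun ℝ ι from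
    funext fun i => (Pi.basisFun_apply ℝ ι i).symm, Module.Basis.mem_span_image] at hmem
  have := Finsupp.notMem_support_iff.mp fun h => hl (hmem h)
  rw [Pi.basisFun_repr, Pi.sub_apply, sub_eq_zero] at this
  exact this.symm

theorem apply_eq_self (hπ : IsProjOntoKer Φ K π) (hK : IsBasic Φ K) {x : ι → ℝ}
    (hx : ∑ i, x i • Φ i = 0) : π x = x := by
  refine (sub_eq_zero.mp (hK.eq_zero_of_sum_smul_eq_zero (x := π x - x)
    (fun l hl => by rw [Pi.sub_apply, hπ.apply_of_notMem x hl, sub_self]) ?_))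
  simp only [Pi.sub_apply, sub_smul, sum_sub_distrib, hπ.sum_smul_eq_zero, hx, sub_self]

theorem apply_single_of_mem (hπ : IsProjOntoKer Φ K π) (hK : IsBasic Φ K) {i : ι} (hi : i ∈ K) :
    π (Pi.single i 1) = 0 :=
  hK.eq_zero_of_sum_smul_eq_zero
    (fun l hl => by
      rw [hπ.apply_of_notMem _ hl, Pi.single_eq_of_ne (ne_of_mem_of_not_mem hi hl).symm])
    (hπ.sum_smul_eq_zero _)

theorem eq_sum_compl (hπ : IsProjOntoKer Φ K π) (hK : IsBasic Φ K) {x : ι → ℝ}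
    (hx : ∑ i, x i • Φ i = 0) : x = ∑ l ∈ Kᶜ, x l • π (Pi.single l 1) := by
  calc x = π (∑ l, x l • Pi.single l 1) := by
        simp_rw [← Pi.single_smul, smul_eq_mul, mul_one, univ_sum_single, hπ.apply_eq_self hK hx]
    _ = ∑ l, x l • π (Pi.single l 1) := by simp only [map_sum, map_smul]
    _ = ∑ l ∈ Kᶜ, x l • π (Pi.single l 1) := (sum_subset (subset_univ _) fun l _ hl => by
        rw [hπ.apply_single_of_mem hK (by simpa using hl), smul_zero]).symm

theorem map_sub_nonpos (hπ : IsProjOntoKer Φ K π) (hK : IsBasic Φ K) (β : (ι → ℝ) →ₗ[ℝ] ℝ)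
    {I : Finset ι} (hopt : ∀ j ∈ I \ K, β (π (Pi.single j 1)) < 0) {c c' : ι → ℝ}
    (hc : ∀ i, 0 ≤ c i) (hcI : ∀ i ∉ I, c i = 0) (hc'K : ∀ i ∉ K, c' i = 0)
    (heq : ∑ i, c i • Φ i = ∑ i, c' i • Φ i) :
    β (c - c') ≤ 0 ∧ (β (c - c') = 0 → ∀ i ∉ K, c i = 0) := by
  have hker : ∑ i, (c - c') i • Φ i = 0 := by
    simp only [Pi.sub_apply, sub_smul, sum_sub_distrib, heq, sub_self]
  have hβ : β (c - c') = ∑ l ∈ Kᶜ, c l * β (π (Pi.single l 1)) := by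
    conv_lhs => rw [hπ.eq_sum_compl hK hker]
    simp only [map_sum, map_smul, smul_eq_mul]
    exact sum_congr rfl fun l hl => by rw [Pi.sub_apply, hc'K l (mem_compl.1 hl), sub_zero]
  have hterm : ∀ l ∈ Kᶜ, c l * β (π (Pi.single l 1)) ≤ 0 := by
    intro l hl
    by_cases hlI : l ∈ I
    · exact mul_nonpos_of_nonneg_of_nonpos (hc l) (hopt l (mem_sdiff.2 ⟨hlI, mem_compl.1 hl⟩)).le
    · rw [hcI l hlI, zero_mul]
  refine ⟨hβ ▸ sum_nonpos hterm, fun h0 l hl => ?_⟩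
  have hl0 := (sum_eq_zero_iff_of_nonpos hterm).1 (hβ ▸ h0) l (mem_compl.2 hl)
  by_cases hlI : l ∈ I
  · exact (mul_eq_zero.1 hl0).resolve_right (hopt l (mem_sdiff.2 ⟨hlI, hl⟩)).ne
  · exact hcI l hlI

end IsProjOntoKer

theorem IsRegular.eq_of_mem_coneOf (hgen : Submodule.span ℝ (Set.range Φ) = ⊤) {μ : F} (hμ : IsRegular Φ μ)
    (β : (ι → ℝ) →ₗ[ℝ] ℝ) {I K K' : Finset ι} {π π' : (ι → ℝ) →ₗ[ℝ] (ι → ℝ)}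
    (hK : IsBasic Φ K) (hπ : IsProjOntoKer Φ K π) (hKI : K ⊆ I)
    (hopt : ∀ j ∈ I \ K, β (π (Pi.single j 1)) < 0) (hμK : μ ∈ coneOf Φ K)
    (hK' : IsBasic Φ K') (hπ' : IsProjOntoKer Φ K' π') (hK'I : K' ⊆ I)
    (hopt' : ∀ j ∈ I \ K', β (π' (Pi.single j 1)) < 0) (hμK' : μ ∈ coneOf Φ K') : K = K' := by
  obtain ⟨c, hc, hcK, rfl⟩ := hμK
  obtain ⟨c', hc', hc'K', heq⟩ := hμK'
  have h := hπ'.map_sub_nonpos hK' β hopt' hc (fun i hi => hcK i fun h => hi (hKI h)) hc'K' heq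
  have h' := hπ.map_sub_nonpos hK β hopt hc' (fun i hi => hc'K' i fun h => hi (hK'I h)) hcK heq.symm
  have hβ0 : β (c - c') = 0 := by
    have : β (c' - c) = -β (c - c') := by rw [← map_neg, neg_sub]
    linarith [h.1, h'.1]
  have hcK' := h.2 hβ0
  have hKK' : K ⊆ K' := by
    by_contra hKK'
    refine hμ.notMem_span_of_card_lt hgen (S := K ∩ K') ?_
      (sum_smul_mem_span_of_forall_notMem fun i hi => ?_)
    · exact hK.card_eq ▸ card_lt_card (inf_lt_left.2 hKK')
    · by_cases hiK : i ∈ K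
      exacts [hcK' i fun h => hi (mem_inter.2 ⟨hiK, h⟩), hcK i hiK]
  exact eq_of_subset_of_card_le hKK' (hK'.card_eq.trans hK.card_eq.symm).le

end Projection

section Optimal

open Filter Topology

variable {F : Type*} [AddCommGroup F] [Module ℝ F] {ι : Type*} [Fintype ι] {Φ : ι → F}

def partPolyOn (Φ : ι → F) (I : Finset ι) (μ : F) : Set (ι → ℝ) :=
  {x | x ∈ partPoly Φ μ ∧ ∀ i ∉ I, x i = 0}

theorem isCompact_partPoly [TopologicalSpace F] [ContinuousAdd F] [ContinuousSMul ℝ F]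
    [T1Space F] {a : F →ₗ[ℝ] ℝ} (ha : ∀ i, 0 < a (Φ i)) (μ : F) :
    IsCompact (partPoly Φ μ) := by
  have hbound : partPoly Φ μ ⊆ Set.univ.pi fun i => Set.Icc 0 (a μ / a (Φ i)) := by
    rintro x ⟨hx, rfl⟩ i -
    refine ⟨hx i, (le_div_iff₀ (ha i)).2 ?_⟩
    simp only [map_sum, map_smul, smul_eq_mul]
    exact single_le_sum (f := fun j => x j * a (Φ j)) (fun j _ => mul_nonneg (hx j) (ha j).le)
      (mem_univ i)
  refine (isCompact_univ_pi fun i => isCompact_Icc).of_isClosed_subset ?_ hbound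
  have hsum : Continuous fun x : ι → ℝ => ∑ i, x i • Φ i := by fun_prop
  have hnonneg : IsClosed {x : ι → ℝ | ∀ i, 0 ≤ x i} := by
    rw [Set.ofPred_forall]
    exact isClosed_iInter fun i => isClosed_le continuous_const (continuous_apply i)
  exact hnonneg.inter (isClosed_singleton.preimage hsum)

theorem isCompact_partPolyOn [TopologicalSpace F] [ContinuousAdd F] [ContinuousSMul ℝ F]
    [T1Space F] {a : F →ₗ[ℝ] ℝ} (ha : ∀ i, 0 < a (Φ i)) (I : Finset ι) (μ : F) :
    IsCompact (partPolyOn Φ I μ) := by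
  have hsupp : IsClosed {x : ι → ℝ | ∀ i ∉ I, x i = 0} := by
    simp only [Set.ofPred_forall]
    exact isClosed_iInter fun i => isClosed_iInter fun _ => isClosed_eq (continuous_apply i)
      continuous_const
  exact (isCompact_partPoly ha μ).inter_right hsupp

theorem add_smul_mem_partPolyOn {I : Finset ι} {μ : F} {x w : ι → ℝ}
    (hx : x ∈ partPolyOn Φ I μ) (hw : ∑ i, w i • Φ i = 0) (hwI : ∀ i ∉ I, w i = 0) {t : ℝ}
    (hxw : ∀ i, 0 ≤ x i + t * w i) : x + t • w ∈ partPolyOn Φ I μ := by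
  refine ⟨⟨hxw, ?_⟩, fun i hi => by simp [hx.2 i hi, hwI i hi]⟩
  simp only [Pi.add_apply, Pi.smul_apply, smul_eq_mul, add_smul, mul_smul, sum_add_distrib,
    ← smul_sum, hw, smul_zero, add_zero]
  exact hx.1.2

theorem eventually_nonneg_add_mul {x w : ι → ℝ} (hx : ∀ i, 0 ≤ x i)
    (hw : ∀ i, x i = 0 → 0 ≤ w i) : ∀ᶠ t in 𝓝[>] (0 : ℝ), ∀ i, 0 ≤ x i + t * w i := by
  refine eventually_all.2 fun i => (hx i).eq_or_lt.elim (fun h => ?_) (fun h => ?_)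
  · filter_upwards [self_mem_nhdsWithin] with t (ht : 0 < t)
    rw [← h, zero_add]
    exact mul_nonneg ht.le (hw i h.symm)
  · have hcont : Continuous fun t : ℝ => x i + t * w i := by fun_prop
    have := hcont.tendsto' 0 (x i) (by simp)
    exact nhdsWithin_le_nhds ((this.eventually (lt_mem_nhds h)).mono fun t ht => ht.le)

theorem map_le_zero_of_isMaxOn {I : Finset ι} {μ : F} (β : (ι → ℝ) →ₗ[ℝ] ℝ) {x w : ι → ℝ}
    (hx : x ∈ partPolyOn Φ I μ) (hmax : IsMaxOn β (partPolyOn Φ I μ) x)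
    (hw : ∑ i, w i • Φ i = 0) (hwI : ∀ i ∉ I, w i = 0) (hwx : ∀ i, x i = 0 → 0 ≤ w i) :
    β w ≤ 0 := by
  obtain ⟨t, hxw, ht⟩ := ((eventually_nonneg_add_mul hx.1.1 hwx).and self_mem_nhdsWithin).exists
  have : β (x + t • w) ≤ β x := hmax (add_smul_mem_partPolyOn hx hw hwI hxw)
  rw [map_add, map_smul, smul_eq_mul] at this
  nlinarith [show (0 : ℝ) < t from ht]

theorem exists_neg_of_sum_smul_eq_zero {a : F →ₗ[ℝ] ℝ} (ha : ∀ i, 0 < a (Φ i)) {y : ι → ℝ}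
    (hy : ∑ i, y i • Φ i = 0) (hne : y ≠ 0) : ∃ j, y j < 0 := by
  by_contra! hnn
  have hsum : ∑ i, y i * a (Φ i) = 0 := by simpa using congrArg a hy
  have := (sum_eq_zero_iff_of_nonneg fun i _ => mul_nonneg (hnn i) (ha i).le).1 hsum
  exact hne (funext fun i => (mul_eq_zero.1 (this i (mem_univ i))).resolve_right (ha i).ne')

theorem exists_nonneg_add_smul_support_ssubset {x y : ι → ℝ} (hx : ∀ i, 0 ≤ x i)
    (hyx : ∀ i, x i = 0 → y i = 0) (hy : ∃ j, y j < 0) :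
    ∃ t : ℝ, (∀ i, 0 ≤ x i + t * y i) ∧ Function.support (x + t • y) ⊂ Function.support x := by
  obtain ⟨m, hm, hmin⟩ := exists_min_image ({j | y j < 0} : Finset ι) (fun j => x j / -y j)
    (by simpa [Finset.Nonempty] using hy)
  simp only [mem_filter_univ] at hm hmin
  have hxm : x m ≠ 0 := fun h => hm.ne (hyx m h)
  refine ⟨x m / -y m, fun i => ?_, ?_⟩
  · rcases lt_or_ge (y i) 0 with hyi | hyi
    · have := (le_div_iff₀ (neg_pos.2 hyi)).1 (hmin i hyi)
      linarith
    · exact add_nonneg (hx i) (mul_nonneg (div_nonneg (hx m) (neg_nonneg.2 hm.le)) hyi)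
  · refine (Set.ssubset_iff_of_subset fun i => ?_).2 ⟨m, hxm, ?_⟩
    · simp only [Function.mem_support, Pi.add_apply, Pi.smul_apply, smul_eq_mul]
      exact fun h hxi => h (by rw [hxi, hyx i hxi, mul_zero, add_zero])
    · simp [div_neg, hm.ne]

theorem linearIndepOn_support_of_isMaxOn {a : F →ₗ[ℝ] ℝ} (ha : ∀ i, 0 < a (Φ i))
    {I : Finset ι} {μ : F} (β : (ι → ℝ) →ₗ[ℝ] ℝ) {x : ι → ℝ} (hx : x ∈ partPolyOn Φ I μ)
    (hmax : IsMaxOn β (partPolyOn Φ I μ) x)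
    (hmin : ∀ y ∈ partPolyOn Φ I μ, IsMaxOn β (partPolyOn Φ I μ) y →
      ¬ Function.support y ⊂ Function.support x) :
    LinearIndepOn ℝ Φ ↑(Function.support x).toFinset := by
  classical
  set S := (Function.support x).toFinset
  refine linearIndepOn_finset_iff.2 fun f hf i hi => by_contra fun hfi => ?_
  -- A relation `y` among the support is a direction along which `β` is constant (optimality in
  -- both directions); moving along it until a coordinate vanishes shrinks the support.
  set y : ι → ℝ := fun j => if j ∈ S then f j else 0
  have hyx : ∀ j, x j = 0 → y j = 0 := fun j hj => if_neg (by simpa [S] using hj)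
  have hy : ∑ j, y j • Φ j = 0 := by
    rw [sum_smul_eq_sum_of_forall_notMem (K := S) fun j hj => if_neg hj, ← hf]
    exact sum_congr rfl fun j hj => by rw [if_pos hj]
  have hyI : ∀ j ∉ I, y j = 0 := fun j hj => hyx j (hx.2 j hj)
  have hβy : β y = 0 := by
    have hle := map_le_zero_of_isMaxOn β hx hmax hy hyI fun j hj => (hyx j hj).ge
    have hge := map_le_zero_of_isMaxOn β hx hmax (w := -y)
      (by simp only [Pi.neg_apply, neg_smul, sum_neg_distrib, hy, neg_zero])
      (fun j hj => by rw [Pi.neg_apply, hyI j hj, neg_zero])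
      (fun j hj => by rw [Pi.neg_apply, hyx j hj, neg_zero])
    rw [map_neg] at hge
    linarith
  obtain ⟨t, hxy, hsupp⟩ := exists_nonneg_add_smul_support_ssubset hx.1.1 hyx
    (exists_neg_of_sum_smul_eq_zero ha hy fun h => hfi (by simpa [y, hi] using congr_fun h i))
  refine hmin _ (add_smul_mem_partPolyOn hx hy hyI hxy) (fun z hz => ?_) hsupp
  change β z ≤ β (x + t • y)
  rw [map_add, map_smul, hβy, smul_zero, add_zero]
  exact hmax hz

end Optimal

theorem IsRegular.exists_isBasic_optimal {F : Type*} [NormedAddCommGroup F] [NormedSpace ℝ F]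
    [FiniteDimensional ℝ F] {ι : Type*} [Fintype ι] [DecidableEq ι] {Φ : ι → F}
    (hgen : Submodule.span ℝ (Set.range Φ) = ⊤) {a : F →ₗ[ℝ] ℝ} (ha : ∀ i, 0 < a (Φ i))
    {ρ : Finset ι → (ι → ℝ) →ₗ[ℝ] (ι → ℝ)} (hρ : ∀ K, IsBasic Φ K → IsProjOntoKer Φ K (ρ K))
    {β : (ι → ℝ) →ₗ[ℝ] ℝ} (hβ : ∀ K, IsBasic Φ K → ∀ j ∉ K, β (ρ K (Pi.single j 1)) ≠ 0)
    {μ : F} (hμ : IsRegular Φ μ) {I : Finset ι} (hμI : μ ∈ coneOf Φ I) :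
    ∃ K ⊆ I, IsBasic Φ K ∧ μ ∈ coneOf Φ K ∧ ∀ j ∈ I \ K, β (ρ K (Pi.single j 1)) < 0 := by
  classical
  set P := partPolyOn Φ I μ
  obtain ⟨x₀, hx₀, hmax₀⟩ := (isCompact_partPolyOn ha I μ).exists_isMaxOn
    (hμI.elim fun c ⟨hc, hcI, hμc⟩ => ⟨c, ⟨hc, hμc.symm⟩, hcI⟩)
    (LinearMap.continuous_of_finiteDimensional β).continuousOn
  -- a maximiser whose support is minimal for inclusion
  obtain ⟨_, ⟨x, ⟨hx, hmax⟩, rfl⟩, hmin⟩ := wellFounded_lt.has_min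
    (Function.support '' {x | x ∈ P ∧ IsMaxOn β P x}) ⟨_, x₀, ⟨hx₀, hmax₀⟩, rfl⟩
  set S := (Function.support x).toFinset
  have hxS : ∀ i ∉ S, x i = 0 := by simp [S]
  have hSind : LinearIndepOn ℝ Φ ↑S :=
    linearIndepOn_support_of_isMaxOn ha β hx hmax fun y hy hymax => hmin _ ⟨y, ⟨hy, hymax⟩, rfl⟩
  have hμS : μ ∈ Submodule.span ℝ (Φ '' S) := hx.1.2 ▸ sum_smul_mem_span_of_forall_notMem hxS
  have hS : IsBasic Φ S := isBasic_of_card_eq hSind <| le_antisymm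
    (by simpa using hSind.fintype_card_le_finrank)
    (not_lt.1 fun h => hμ.notMem_span_of_card_lt hgen h hμS)
  have hSI : S ⊆ I := fun i hi =>
    by_contra fun hiI => (by simpa [S] using hi : x i ≠ 0) (hx.2 i hiI)
  refine ⟨S, hSI, hS, ⟨x, hx.1.1, hxS, hx.1.2.symm⟩, fun j hj => ?_⟩
  obtain ⟨hjI, hjS⟩ := mem_sdiff.1 hj
  have hw : ∀ l ∉ S, ρ S (Pi.single j 1) l = (Pi.single j 1 : ι → ℝ) l :=
    fun l hl => (hρ S hS).apply_of_notMem _ hl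
  refine (map_le_zero_of_isMaxOn β hx hmax ((hρ S hS).sum_smul_eq_zero _) (fun l hl => ?_)
    (fun l hl => ?_)).lt_of_ne (hβ S hS j hjS)
  · rw [hw l fun h => hl (hSI h), Pi.single_eq_of_ne fun (h : l = j) => hl (h ▸ hjI)]
  · rw [hw l (by simpa [S] using hl)]
    by_cases hlj : l = j <;> simp [hlj]

section Expansion

variable {ι : Type*} [Fintype ι] [DecidableEq ι]

theorem sum_ite_subset_sdiff_subset {M : Type*} [AddCommMonoid M] {K S : Finset ι}
    (hKS : Disjoint K S) (f : Finset ι → M) :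
    ∑ I, (if K ⊆ I ∧ I \ K ⊆ S then f I else 0) = ∑ J ∈ S.powerset, f (K ∪ J) := by
  rw [← sum_filter]
  refine sum_nbij' (· \ K) (K ∪ ·) (fun I hI => ?_) (fun J hJ => ?_) (fun I hI => ?_)
    (fun J hJ => ?_) (fun I hI => ?_)
  · exact mem_powerset.2 (mem_filter.1 hI).2.2
  · exact mem_filter.2 ⟨mem_univ _, subset_union_left,
      union_sdiff_left K J ▸ sdiff_subset.trans (mem_powerset.1 hJ)⟩
  · exact union_sdiff_of_subset (mem_filter.1 hI).2.1
  · exact union_sdiff_cancel_left (hKS.mono_right (mem_powerset.1 hJ))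
  · rw [union_sdiff_of_subset (mem_filter.1 hI).2.1]

theorem sum_powerset_neg_one_pow_mul {R : Type*} [CommRing R] (p q : ι → R) {K S : Finset ι}
    (hKS : Disjoint K S) :
    ∑ J ∈ S.powerset, (-1) ^ #J * ((∏ j ∈ (K ∪ J)ᶜ, p j) * ∏ i ∈ K ∪ J, (p i + q i)) =
      (-1) ^ #S * ((∏ j ∈ (K ∪ S)ᶜ, p j) * (∏ i ∈ S, q i) * ∏ i ∈ K, (p i + q i)) := by
  have hq : (-1) ^ #S * ∏ i ∈ S, q i =
      ∑ J ∈ S.powerset, (∏ i ∈ J, -(p i + q i)) * ∏ i ∈ S \ J, p i := by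
    rw [← prod_neg, ← prod_add]
    exact prod_congr rfl fun i _ => by ring
  calc _ = ∑ J ∈ S.powerset, (∏ j ∈ (K ∪ S)ᶜ, p j) * (∏ i ∈ K, (p i + q i)) *
        ((∏ i ∈ J, -(p i + q i)) * ∏ i ∈ S \ J, p i) := sum_congr rfl fun J hJ => by
        have hJS := mem_powerset.1 hJ
        have hcompl : (K ∪ J)ᶜ = (K ∪ S)ᶜ ∪ (S \ J) := by
          ext i
          simp only [mem_compl, mem_union, mem_sdiff]
          have h1 : i ∈ J → i ∈ S := fun h => hJS h
          have h2 : i ∈ K → i ∉ S := fun h => disjoint_left.1 hKS h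
          tauto
        rw [hcompl, prod_union (hKS.mono_right hJS), prod_neg,
          prod_union (disjoint_compl_left.mono_right (sdiff_subset.trans subset_union_right))]
        ring
    _ = _ := by rw [← mul_sum, ← hq]; ring

theorem filter_pos_eq_compl_union_filter_neg {K : Finset ι} {f : ι → ℝ} (hf : ∀ j ∉ K, f j ≠ 0) :
    {j ∈ Kᶜ | 0 < f j} = (K ∪ {j ∈ Kᶜ | f j < 0})ᶜ := by
  ext j
  have := hf j
  simp only [mem_filter, mem_compl, mem_union, not_or, not_and, not_lt]
  constructor
  · rintro ⟨hj, hpos⟩; exact ⟨hj, fun _ => hpos.le⟩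
  · rintro ⟨hj, hle⟩; exact ⟨hj, (hle hj).lt_of_ne' (this hj)⟩

theorem sum_ite_subset_filter_neg_eq {R : Type*} [CommRing R] (p q : ι → R) {K : Finset ι}
    {f : ι → ℝ} (hf : ∀ j ∉ K, f j ≠ 0) :
    ∑ I, (if K ⊆ I ∧ I \ K ⊆ {j ∈ Kᶜ | f j < 0} then
        (-1) ^ (#I - #K) * ((∏ j ∈ Iᶜ, p j) * ∏ i ∈ I, (p i + q i)) else 0) =
      (-1) ^ #{j ∈ Kᶜ | f j < 0} * ((∏ i ∈ {j ∈ Kᶜ | 0 < f j}, p i) *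
        (∏ i ∈ {j ∈ Kᶜ | f j < 0}, q i) * ∏ i ∈ K, (p i + q i)) := by
  have hdisj : Disjoint K {j ∈ Kᶜ | f j < 0} :=
    disjoint_left.2 fun j hj hj' => (mem_compl.1 (mem_filter.1 hj').1) hj
  rw [sum_ite_subset_sdiff_subset hdisj, filter_pos_eq_compl_union_filter_neg hf,
    ← sum_powerset_neg_one_pow_mul _ _ hdisj]
  refine sum_congr rfl fun J hJ => ?_
  rw [card_union_of_disjoint (hdisj.mono_right (mem_powerset.1 hJ)), Nat.add_sub_cancel_left]

end Expansion

theorem card_filter_bases_eq_ite {F : Type*} [NormedAddCommGroup F] [NormedSpace ℝ F]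
    [FiniteDimensional ℝ F] {ι : Type*} [Fintype ι] [DecidableEq ι] {Φ : ι → F}
    (hgen : Submodule.span ℝ (Set.range Φ) = ⊤) (hsal : ∃ a : F →ₗ[ℝ] ℝ, ∀ i, 0 < a (Φ i))
    {τ : Set F} (hτ : IsTope Φ τ)
    {ρ : Finset ι → (ι → ℝ) →ₗ[ℝ] (ι → ℝ)} (hρ : ∀ K, IsBasic Φ K → IsProjOntoKer Φ K (ρ K))
    {β : (ι → ℝ) →ₗ[ℝ] ℝ} (hβ : ∀ K, IsBasic Φ K → ∀ j ∉ K, β (ρ K (Pi.single j 1)) ≠ 0)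
    (I : Finset ι) :
    #{K | K ∈ Bases Φ τ ∧ K ⊆ I ∧ I \ K ⊆ {j ∈ Kᶜ | β (ρ K (Pi.single j 1)) < 0}} =
      if I ∈ Gens Φ τ then 1 else 0 := by
  obtain ⟨μ, hμ, rfl⟩ := hτ
  obtain ⟨a, ha⟩ := hsal
  have hμτ : μ ∈ connectedComponentIn {x | IsRegular Φ x} μ := mem_connectedComponentIn hμ
  have hopt_iff (K : Finset ι) : I \ K ⊆ {j ∈ Kᶜ | β (ρ K (Pi.single j 1)) < 0} ↔
      ∀ j ∈ I \ K, β (ρ K (Pi.single j 1)) < 0 :=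
    ⟨fun h j hj => (mem_filter.1 (h hj)).2,
      fun h j hj => mem_filter.2 ⟨mem_compl.2 (mem_sdiff.1 hj).2, h j hj⟩⟩
  split_ifs with hI
  · obtain ⟨K, hKI, hK, hμK, hopt⟩ := hμ.exists_isBasic_optimal hgen ha hρ hβ (hI.2 hμτ)
    refine card_eq_one.2 ⟨K, eq_singleton_iff_unique_mem.2 ⟨?_, fun K' hK' => ?_⟩⟩
    · exact (mem_filter_univ _).2 ⟨⟨hK, hμ.connectedComponentIn_subset_coneOf hgen hK hμK⟩, hKI,
        (hopt_iff K).2 hopt⟩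
    · obtain ⟨⟨hK', hτK'⟩, hK'I, hopt'⟩ := (mem_filter_univ _).1 hK'
      exact (hμ.eq_of_mem_coneOf hgen β hK (hρ K hK) hKI hopt hμK hK' (hρ K' hK') hK'I
        ((hopt_iff K').1 hopt') (hτK' hμτ)).symm
  · refine card_eq_zero.2 (filter_eq_empty_iff.2 ?_)
    rintro K - ⟨⟨hK, hτK⟩, hKI, -⟩
    exact hI ⟨top_unique (hK.2 ▸ Submodule.span_mono (Set.image_mono hKI)),
      hτK.trans (coneOf_mono hKI)⟩

theorem lawrence_varchenko_eq_brianchon_gram_general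
    {F : Type*} [NormedAddCommGroup F] [NormedSpace ℝ F] [FiniteDimensional ℝ F]
    {N : ℕ} (Φ : Fin N → F)
    (hgen : Submodule.span ℝ (Set.range Φ) = ⊤)
    (hsal : ∃ a : F →ₗ[ℝ] ℝ, ∀ i, 0 < a (Φ i))
    (τ : Set F) (hτ : IsTope Φ τ)
    (ρ : Finset (Fin N) → (Fin N → ℝ) →ₗ[ℝ] (Fin N → ℝ))
    (hρ : ∀ K : Finset (Fin N), IsBasic Φ K → ∀ x : Fin N → ℝ,
      (∑ i, (ρ K x) i • Φ i = 0) ∧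
      x - ρ K x ∈ Submodule.span ℝ ((fun i => (Pi.single i 1 : Fin N → ℝ)) '' ↑K))
    (β : (Fin N → ℝ) →ₗ[ℝ] ℝ)
    (hβ : ∀ K : Finset (Fin N), IsBasic Φ K →
      ∀ j ∉ K, β (ρ K (Pi.single j 1)) ≠ 0) :
    (∑ K : Finset (Fin N),
      if K ∈ Bases Φ τ then
        (-1 : MvPolynomial (Fin N ⊕ Fin N) ℤ) ^
            ((Kᶜ.filter (fun j => β (ρ K (Pi.single j 1)) < 0)).card) *
          ((∏ i ∈ Kᶜ.filter (fun j => 0 < β (ρ K (Pi.single j 1))), X (Sum.inl i)) *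
            (∏ i ∈ Kᶜ.filter (fun j => β (ρ K (Pi.single j 1)) < 0), X (Sum.inr i)) *
            ∏ i ∈ K, (X (Sum.inl i) + X (Sum.inr i)))
      else 0) = BGpoly Φ τ := by
  set T : Finset (Fin N) → MvPolynomial (Fin N ⊕ Fin N) ℤ := fun I =>
    (-1) ^ (#I - Module.finrank ℝ F) *
      ((∏ j ∈ Iᶜ, X (Sum.inl j)) * ∏ i ∈ I, (X (Sum.inl i) + X (Sum.inr i)))
  calc _ = ∑ K : Finset (Fin N), ∑ I, if K ∈ Bases Φ τ ∧ K ⊆ I ∧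
        I \ K ⊆ {j ∈ Kᶜ | β (ρ K (Pi.single j 1)) < 0} then T I else 0 := by
        refine sum_congr rfl fun K _ => ?_
        by_cases hK : K ∈ Bases Φ τ
        · simp only [hK, true_and, if_true, T, ← hK.1.card_eq]
          exact (sum_ite_subset_filter_neg_eq _ _ (hβ K hK.1)).symm
        · simp only [hK, false_and, if_false, sum_const_zero]
    _ = ∑ I, #{K | K ∈ Bases Φ τ ∧ K ⊆ I ∧
        I \ K ⊆ {j ∈ Kᶜ | β (ρ K (Pi.single j 1)) < 0}} • T I := by
        rw [sum_comm]
        simp only [← sum_filter, sum_const]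
    _ = BGpoly Φ τ := by
        refine sum_congr rfl fun I _ => ?_
        rw [card_filter_bases_eq_ite hgen hsal hτ hρ hβ I, ite_smul, one_smul, zero_smul]

/-- The combinatorial Lawrence-Varchenko function equals the combinatorial
Brianchon-Gram function: `Y(Φ,τ,β) = X(Φ,τ)`.  Here `ρ K` is the projection of
`ℝ^N` onto `V = ker(x ↦ ∑ x i • Φ i)` with kernel spanned by `{e i : i ∈ K}`,
for each `Φ`-basic `K`, and `β` is a `Φ`-regular linear form. -/
theorem lawrence_varchenko_eq_brianchon_gram
    {F : Type*} [NormedAddCommGroup F] [NormedSpace ℝ F] [FiniteDimensional ℝ F]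
    {N : ℕ} (Φ : Fin N → F)
    (hne : ∀ i, Φ i ≠ 0)
    (hgen : Submodule.span ℝ (Set.range Φ) = ⊤)
    (hsal : ∃ a : F →ₗ[ℝ] ℝ, ∀ i, 0 < a (Φ i))
    (τ : Set F) (hτ : IsTope Φ τ) (hτc : τ ⊆ fullCone Φ)
    (ρ : Finset (Fin N) → (Fin N → ℝ) →ₗ[ℝ] (Fin N → ℝ))
    (hρ : ∀ K : Finset (Fin N), IsBasic Φ K → ∀ x : Fin N → ℝ,
      (∑ i, (ρ K x) i • Φ i = 0) ∧
      x - ρ K x ∈ Submodule.span ℝ ((fun i => (Pi.single i 1 : Fin N → ℝ)) '' ↑K))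
    (β : (Fin N → ℝ) →ₗ[ℝ] ℝ)
    (hβ : ∀ K : Finset (Fin N), IsBasic Φ K →
      ∀ j ∉ K, β (ρ K (Pi.single j 1)) ≠ 0) :
    (∑ K : Finset (Fin N),
      if K ∈ Bases Φ τ then
        (-1 : MvPolynomial (Fin N ⊕ Fin N) ℤ) ^
            ((Kᶜ.filter (fun j => β (ρ K (Pi.single j 1)) < 0)).card) *
          ((∏ i ∈ Kᶜ.filter (fun j => 0 < β (ρ K (Pi.single j 1))), X (Sum.inl i)) *
            (∏ i ∈ Kᶜ.filter (fun j => β (ρ K (Pi.single j 1)) < 0), X (Sum.inr i)) *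
            ∏ i ∈ K, (X (Sum.inl i) + X (Sum.inr i)))
      else 0) = BGpoly Φ τ :=
  lawrence_varchenko_eq_brianchon_gram_general Φ hgen hsal τ hτ ρ hρ β hβ

end AC
end
end

section
/- Let τ_1 and τ_2 be adjacent Φ-topes with τ_1 ⊆ c(Φ), with common wall H, and let K ∈ B(Φ,τ_1) with K ∉ B(Φ,τ_2). Then: (i) there is exactly one index k_1 ∈ K with φ_{k_1} ∉ H; this φ_{k_1} lies in the open side of H containing τ_1, and φ_k ∈ H for every other k ∈ K; (ii) if τ_{12} is the unique (Φ∩H)-tope such that closure(τ_1) ∩ closure(τ_2) ⊆ closure(τ_{12}), then τ_{12} is contained in the cone of nonnegative linear combinations of the vectors {φ_k : k ∈ K, k ≠ k_1}. -/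
open scoped Pointwise
open Classical MvPolynomial

noncomputable section

namespace AC

/-! The coordinate functionals of the basis `(Φ k)_{k ∈ K}` have kernels spanned by `r - 1`
members of `Φ`, i.e. walls, so each has constant sign on every tope. All of them are positive on
`τ₁ ⊆ c(Φ_K)`, and since `K ∉ B(Φ,τ₂)` one of them, for `k₁`, is negative on `τ₂`; it therefore
vanishes on `closure τ₁ ∩ closure τ₂`, which spans `H`, so `H` is its kernel. This gives (i).
Restricted to `H`, the other coordinates are the coordinates for the basis `(Φ k)_{k ≠ k₁}` of
`H`, so each has constant sign on the `(Φ ∩ H)`-tope `τ₁₂`; a negative one would vanish on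
`closure τ₁ ∩ closure τ₂ ⊆ closure τ₁₂`, hence on `H ∋ Φ k`, which is absurd. -/

open Module

theorem _root_.IsPreconnected.forall_pos_or_forall_neg {X : Type*} [TopologicalSpace X]
    {s : Set X} (hs : IsPreconnected s) {f : X → ℝ} (hf : ContinuousOn f s)
    (hf0 : ∀ x ∈ s, f x ≠ 0) : (∀ x ∈ s, 0 < f x) ∨ ∀ x ∈ s, f x < 0 := by
  by_contra! ⟨⟨a, ha, hfa⟩, b, hb, hfb⟩
  obtain ⟨c, hc, hfc⟩ := hs.intermediate_value ha hb hf ⟨hfa, hfb⟩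
  exact hf0 c hc hfc

section Basic

variable {E : Type*} [AddCommGroup E] [Module ℝ E] {ι : Type*} {Ψ : ι → E} {K J : Finset ι}

theorem IsBasic.span_range_eq_top (h : IsBasic Ψ K) :
    Submodule.span ℝ (Set.range fun k : K => Ψ k) = ⊤ := by
  rw [← h.2, Set.image_eq_range]
  rfl

def IsBasic.basis_s8 (h : IsBasic Ψ K) : Basis K ℝ E :=
  .mk h.1 h.span_range_eq_top.ge

@[simp]
theorem IsBasic.basis_apply_s8 (h : IsBasic Ψ K) (k : K) : h.basis_s8 k = Ψ k :=
  Basis.mk_apply _ _ _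

theorem IsBasic.card_eq_finrank (h : IsBasic Ψ K) : K.card = finrank ℝ E := by
  rw [finrank_eq_card_basis h.basis_s8, Fintype.card_coe]

theorem IsBasic.coord_apply [DecidableEq ι] (h : IsBasic Ψ K) (k j : K) :
    h.basis_s8.coord k (Ψ j) = if j = k then 1 else 0 := by
  rw [← h.basis_apply_s8, Basis.coord_apply, Basis.repr_self, Finsupp.single_apply]

theorem IsBasic.linearIndependent_of_subset (h : IsBasic Ψ K) (hJ : J ⊆ K) :
    LinearIndependent ℝ fun j : J => Ψ j :=
  h.1.comp (fun j : J => (⟨j, hJ j.2⟩ : K)) fun _ _ hij => Subtype.ext (Subtype.mk.inj hij)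

theorem IsBasic.mem_coneOf_iff [Fintype ι] (h : IsBasic Ψ K) (hJ : J ⊆ K) {v : E} :
    v ∈ coneOf Ψ ↑J ↔ ∀ k : K, 0 ≤ h.basis_s8.coord k v ∧ (k.1 ∉ J → h.basis_s8.coord k v = 0) := by
  have hsum : ∀ c : ι → ℝ, (∀ i ∉ K, c i = 0) →
      ∑ i, c i • Ψ i = ∑ k : K, c k • h.basis_s8 k := by
    intro c hc
    rw [← Finset.sum_subset K.subset_univ fun i _ hi => by simp [hc i hi], ← K.sum_coe_sort]
    simp
  constructor
  · rintro ⟨c, hc0, hcJ, rfl⟩ k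
    have hcK : ∀ i ∉ K, c i = 0 := fun i hi => hcJ i fun hiJ => hi (hJ hiJ)
    rw [hsum c hcK, Basis.coord_apply, h.basis_s8.repr_sum_self]
    exact ⟨hc0 k, hcJ k⟩
  · intro hv
    refine ⟨fun i => if hi : i ∈ K then h.basis_s8.coord ⟨i, hi⟩ v else 0, fun i => ?_,
      fun i hi => ?_, ?_⟩
    · dsimp only
      split_ifs with hiK
      exacts [(hv ⟨i, hiK⟩).1, le_rfl]
    · dsimp only
      split_ifs with hiK
      · exact (hv _).2 hi
      · rfl
    · rw [hsum _ fun i hi => dif_neg hi]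
      simp only [Finset.coe_mem, dif_pos, Subtype.coe_eta, Basis.coord_apply, Basis.sum_repr]

theorem IsWall.finrank_add_one {H : Submodule ℝ E} (hH : IsWall Ψ H) :
    finrank ℝ H + 1 = finrank ℝ E := by
  obtain ⟨S, hcard, hli, rfl⟩ := hH
  rw [← hcard, Set.image_eq_range]
  simpa using finrank_span_eq_card hli

theorem IsWall.eq_of_le [FiniteDimensional ℝ E] {H H' : Submodule ℝ E} (hH : IsWall Ψ H)
    (hH' : IsWall Ψ H') (hle : H ≤ H') : H = H' :=
  Submodule.eq_of_le_of_finrank_eq hle <| by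
    have := hH.finrank_add_one
    have := hH'.finrank_add_one
    omega

theorem IsBasic.ker_coord_eq_span [DecidableEq ι] (h : IsBasic Ψ K) (k : K) :
    LinearMap.ker (h.basis_s8.coord k) = Submodule.span ℝ (Ψ '' ↑(K.erase k)) := by
  have himage : Ψ '' ↑(K.erase k) = h.basis_s8 '' {k}ᶜ := by
    ext v
    simp only [Set.mem_image, Finset.coe_erase, Set.mem_sdiff, Set.mem_singleton_iff,
      Finset.mem_coe, Set.mem_compl_iff, basis_apply_s8, Subtype.exists, Subtype.ext_iff,
      exists_prop, and_assoc]
  ext v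
  rw [himage, Basis.mem_span_image, Set.subset_compl_singleton_iff, LinearMap.mem_ker,
    Basis.coord_apply, Finset.mem_coe, Finsupp.mem_support_iff, not_not]

theorem IsBasic.isWall_ker_coord [DecidableEq ι] (h : IsBasic Ψ K) (k : K) :
    IsWall Ψ (LinearMap.ker (h.basis_s8.coord k)) :=
  ⟨K.erase k, by rw [Finset.card_erase_add_one k.2, h.card_eq_finrank],
    h.linearIndependent_of_subset (K.erase_subset _), h.ker_coord_eq_span k⟩

theorem IsBasic.coord_ne_zero_of_isRegular [DecidableEq ι] (h : IsBasic Ψ K) {x : E}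
    (hx : IsRegular Ψ x) (k : K) : h.basis_s8.coord k x ≠ 0 :=
  fun hx0 => hx _ (h.isWall_ker_coord k) hx0

theorem IsBasic.coord_pos_of_mem_coneOf [Fintype ι] [DecidableEq ι] (h : IsBasic Ψ K) {x : E}
    (hx : IsRegular Ψ x) (hxK : x ∈ coneOf Ψ ↑K) (k : K) : 0 < h.basis_s8.coord k x :=
  ((h.mem_coneOf_iff subset_rfl).1 hxK k).1.lt_of_ne' (h.coord_ne_zero_of_isRegular hx k)

theorem IsBasic.mem_ker_coord [DecidableEq ι] (h : IsBasic Ψ K) {j k : K} (hjk : j ≠ k) :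
    Ψ j ∈ LinearMap.ker (h.basis_s8.coord k) := by
  rw [LinearMap.mem_ker, h.coord_apply, if_neg hjk]

theorem isBasic_of_linearIndependent [FiniteDimensional ℝ E]
    (hli : LinearIndependent ℝ fun j : K => Ψ j) (hcard : K.card = finrank ℝ E) :
    IsBasic Ψ K := by
  refine ⟨hli, ?_⟩
  rw [Set.image_eq_range]
  exact hli.span_eq_top_of_card_eq_finrank' (by rwa [Fintype.card_coe])

/-- `Ψ ∩ H` in the paper's notation. -/
def restrictSeq (Ψ : ι → E) (H : Submodule ℝ E) : {i // Ψ i ∈ H} → H := fun i => ⟨Ψ i, i.2⟩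

theorem IsBasic.isBasic_restrictSeq [DecidableEq ι] [FiniteDimensional ℝ E]
    (h : IsBasic Ψ K) {H : Submodule ℝ E} {k₁ : K} (hH : H = LinearMap.ker (h.basis_s8.coord k₁)) :
    IsBasic (restrictSeq Ψ H) ((K.erase k₁).subtype (Ψ · ∈ H)) := by
  have hmem : ∀ j ∈ K.erase k₁, Ψ j ∈ H := fun j hj => by
    obtain ⟨hjk, hjK⟩ := Finset.mem_erase.1 hj
    exact hH ▸ h.mem_ker_coord (j := ⟨j, hjK⟩) fun hj' => hjk (congrArg Subtype.val hj')
  refine isBasic_of_linearIndependent (.of_comp H.subtype ?_) ?_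
  · exact (h.linearIndependent_of_subset (K.erase_subset k₁.1)).comp
      (fun j : (K.erase k₁.1).subtype (Ψ · ∈ H) =>
        (⟨j.1.1, Finset.mem_subtype.1 j.2⟩ : K.erase k₁.1))
      fun _ _ hij => Subtype.ext (Subtype.ext (Subtype.mk.inj hij))
  · have hfin := (hH ▸ h.isWall_ker_coord k₁ : IsWall Ψ H).finrank_add_one
    rw [Finset.card_subtype, Finset.filter_true_of_mem hmem]
    have := Finset.card_erase_add_one k₁.2
    have := h.card_eq_finrank
    omega

theorem IsBasic.isWall_ker_coord_comp_subtype [DecidableEq ι] [FiniteDimensional ℝ E]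
    (h : IsBasic Ψ K) {H : Submodule ℝ E} {k₁ : K} (hH : H = LinearMap.ker (h.basis_s8.coord k₁))
    {k : K} (hk : k ≠ k₁) :
    IsWall (restrictSeq Ψ H) (LinearMap.ker ((h.basis_s8.coord k).comp H.subtype)) := by
  have h' := h.isBasic_restrictSeq hH
  let k' : (K.erase k₁.1).subtype (Ψ · ∈ H) :=
    ⟨⟨k, hH ▸ h.mem_ker_coord hk⟩, Finset.mem_subtype.2 <|
      Finset.mem_erase.2 ⟨fun hk' => hk (Subtype.ext hk'), k.2⟩⟩
  have hcoord : h'.basis_s8.coord k' = (h.basis_s8.coord k).comp H.subtype := by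
    refine h'.basis_s8.ext fun j => ?_
    have hj : j.1.1 ∈ K := Finset.mem_of_mem_erase (Finset.mem_subtype.1 j.2)
    rw [Basis.coord_apply, Basis.repr_self, Finsupp.single_apply, LinearMap.comp_apply,
      IsBasic.basis_apply_s8, Submodule.subtype_apply]
    change _ = h.basis_s8.coord k (Ψ (⟨j.1.1, hj⟩ : K))
    rw [h.coord_apply]
    refine if_congr ?_ rfl rfl
    simp only [k', Subtype.ext_iff]
  exact hcoord ▸ h'.isWall_ker_coord k'

end Basic

section Topes

variable {E : Type*} [AddCommGroup E] [Module ℝ E] [TopologicalSpace E]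
  {ι : Type*} {Ψ : ι → E} {K : Finset ι} {τ τ₁ τ₂ : Set E} {H : Submodule ℝ E}

theorem IsTope.subset_setOf_isRegular (hτ : IsTope Ψ τ) : τ ⊆ {x | IsRegular Ψ x} := by
  obtain ⟨μ, -, rfl⟩ := hτ
  exact connectedComponentIn_subset _ _

theorem IsTope.isPreconnected (hτ : IsTope Ψ τ) : IsPreconnected τ := by
  obtain ⟨μ, -, rfl⟩ := hτ
  exact isPreconnected_connectedComponentIn

theorem Adjacent.le_ker (hadj : Adjacent Ψ τ₁ τ₂ H) {ξ : E →ₗ[ℝ] ℝ}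
    (hξ : ∀ x ∈ closure τ₁ ∩ closure τ₂, ξ x = 0) : H ≤ LinearMap.ker ξ := by
  rw [← hadj.2.2.2.2.2, Submodule.span_le]
  exact hξ

variable [IsTopologicalAddGroup E] [ContinuousSMul ℝ E] [T2Space E] [FiniteDimensional ℝ E]

theorem IsTope.forall_pos_or_forall_neg (hτ : IsTope Ψ τ) {ξ : E →ₗ[ℝ] ℝ}
    (hξ : IsWall Ψ (LinearMap.ker ξ)) : (∀ x ∈ τ, 0 < ξ x) ∨ ∀ x ∈ τ, ξ x < 0 :=
  hτ.isPreconnected.forall_pos_or_forall_neg ξ.continuous_of_finiteDimensional.continuousOn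
    fun _ hx hx0 => hτ.subset_setOf_isRegular hx _ hξ hx0

theorem Adjacent.eq_ker_of_pos_of_neg (hadj : Adjacent Ψ τ₁ τ₂ H) {ξ : E →ₗ[ℝ] ℝ}
    (hξ : IsWall Ψ (LinearMap.ker ξ)) (h₁ : ∀ x ∈ τ₁, 0 < ξ x) (h₂ : ∀ x ∈ τ₂, ξ x < 0) :
    H = LinearMap.ker ξ := by
  have hcont := ξ.continuous_of_finiteDimensional
  refine hadj.2.2.2.1.eq_of_le hξ (hadj.le_ker fun x hx => le_antisymm ?_ ?_)
  · exact closure_lt_subset_le hcont continuous_const (closure_mono h₂ hx.2)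
  · exact closure_lt_subset_le continuous_const hcont (closure_mono h₁ hx.1)

variable [DecidableEq ι]

theorem IsBasic.exists_coord_neg_of_not_subset_coneOf [Fintype ι] (h : IsBasic Ψ K)
    (hτ : IsTope Ψ τ) (hτK : ¬τ ⊆ coneOf Ψ ↑K) : ∃ k, ∀ x ∈ τ, h.basis_s8.coord k x < 0 := by
  by_contra! hnonneg
  refine hτK fun x hx => (h.mem_coneOf_iff subset_rfl).2 fun k => ⟨?_, fun hk => absurd k.2 hk⟩
  obtain ⟨y, hy, hy0⟩ := hnonneg k
  rcases hτ.forall_pos_or_forall_neg (h.isWall_ker_coord k) with hpos | hneg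
  · exact (hpos x hx).le
  · exact absurd (hneg y hy) hy0.not_gt

theorem IsBasic.image_subset_coneOf_erase [Fintype ι] (h : IsBasic Ψ K)
    (hadj : Adjacent Ψ τ₁ τ₂ H) {k₁ : K} (hH : H = LinearMap.ker (h.basis_s8.coord k₁))
    (hpos : ∀ k, ∀ x ∈ τ₁, 0 < h.basis_s8.coord k x) {τ₁₂ : Set H}
    (hτ₁₂ : IsTope (restrictSeq Ψ H) τ₁₂)
    (hcl : closure τ₁ ∩ closure τ₂ ⊆ Subtype.val '' closure τ₁₂) :
    Subtype.val '' τ₁₂ ⊆ coneOf Ψ ↑(K.erase k₁) := by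
  have hpos₁₂ : ∀ k ≠ k₁, ∀ y ∈ τ₁₂, 0 < h.basis_s8.coord k y := by
    intro k hk
    have hwall := h.isWall_ker_coord_comp_subtype hH hk
    refine (hτ₁₂.forall_pos_or_forall_neg hwall).resolve_right fun hneg => ?_
    have hcont := ((h.basis_s8.coord k).comp H.subtype).continuous_of_finiteDimensional
    have hle : H ≤ LinearMap.ker (h.basis_s8.coord k) := hadj.le_ker fun x hx => by
      obtain ⟨y, hy, rfl⟩ := hcl hx
      refine le_antisymm ?_ ?_
      · exact closure_lt_subset_le hcont continuous_const (closure_mono hneg hy)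
      · exact closure_lt_subset_le continuous_const
          (h.basis_s8.coord k).continuous_of_finiteDimensional (closure_mono (hpos k) hx.1)
    have := hle (hH ▸ h.mem_ker_coord hk)
    simp [h.coord_apply] at this
  rintro _ ⟨y, hy, rfl⟩
  refine (h.mem_coneOf_iff (K.erase_subset k₁.1)).2 fun k => ?_
  by_cases hk : k = k₁
  · subst hk
    have hy₀ : h.basis_s8.coord k y = 0 := hH ▸ y.2
    simp [hy₀]
  · exact ⟨(hpos₁₂ k hk y hy).le,
      fun hk' => absurd (Finset.mem_erase.2 ⟨fun hkk => hk (Subtype.ext hkk), k.2⟩) hk'⟩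

end Topes

theorem basic_subsets_adjacent_topes_general
    {F : Type*} [NormedAddCommGroup F] [NormedSpace ℝ F] [FiniteDimensional ℝ F]
    {N : ℕ} (Φ : Fin N → F)
    (τ₁ τ₂ : Set F) (H : Submodule ℝ F) (hadj : Adjacent Φ τ₁ τ₂ H)
    (K : Finset (Fin N)) (hK₁ : K ∈ Bases Φ τ₁) (hK₂ : K ∉ Bases Φ τ₂) :
    (∃ k₁ ∈ K, Φ k₁ ∉ H ∧ InOpenSideOf H τ₁ (Φ k₁) ∧
      ∀ k ∈ K, k ≠ k₁ → Φ k ∈ H) ∧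
    (∀ τ₁₂ : Set ↥H,
      IsTope (fun i : {i : Fin N // Φ i ∈ H} => (⟨Φ i.1, i.2⟩ : ↥H)) τ₁₂ →
      closure τ₁ ∩ closure τ₂ ⊆ Subtype.val '' closure τ₁₂ →
      ∀ k₁ ∈ K, Φ k₁ ∉ H →
        Subtype.val '' τ₁₂ ⊆ coneOf Φ (↑(K.erase k₁) : Set (Fin N))) := by
  obtain ⟨hK, hτ₁K⟩ := hK₁
  have hpos : ∀ k, ∀ x ∈ τ₁, 0 < hK.basis_s8.coord k x := fun k x hx =>
    hK.coord_pos_of_mem_coneOf (hadj.1.subset_setOf_isRegular hx) (hτ₁K hx) k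
  obtain ⟨k₁, hneg⟩ := hK.exists_coord_neg_of_not_subset_coneOf hadj.2.1 fun h => hK₂ ⟨hK, h⟩
  have hH := hadj.eq_ker_of_pos_of_neg (hK.isWall_ker_coord k₁) (hpos k₁) hneg
  have hk₁ : hK.basis_s8.coord k₁ (Φ k₁) = 1 := by simp [hK.coord_apply]
  have hKH : ∀ k ∈ K, k ≠ k₁ → Φ k ∈ H := fun k hk hkk₁ =>
    hH ▸ hK.mem_ker_coord (j := ⟨k, hk⟩) fun h => hkk₁ (congrArg Subtype.val h)
  refine ⟨⟨k₁, k₁.2, fun h => ?_, ⟨hK.basis_s8.coord k₁, fun x hx => ?_, hpos k₁, ?_⟩, hKH⟩, ?_⟩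
  · simp [hH, hk₁] at h
  · exact LinearMap.mem_ker.1 (hH ▸ hx)
  · simp [hk₁]
  · intro τ₁₂ hτ₁₂ hcl k hk hkH
    obtain rfl : k = k₁ := by_contra fun h => hkH (hKH k hk h)
    exact hK.image_subset_coneOf_erase hadj hH hpos hτ₁₂ hcl

/-- Let `τ₁, τ₂` be adjacent topes with wall `H`, `τ₁ ⊆ c(Φ)`, and let
`K ∈ B(Φ,τ₁) \ B(Φ,τ₂)`.  Then (i) exactly one `k₁ ∈ K` has `Φ k₁ ∉ H`; it
lies in the open side of `H` containing `τ₁`, and all other members of `K`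
lie in `H`; (ii) if `τ₁₂` is a `(Φ∩H)`-tope whose closure contains
`closure τ₁ ∩ closure τ₂`, then `τ₁₂` is contained in the cone generated by
`{Φ k : k ∈ K, k ≠ k₁}`. -/
theorem basic_subsets_adjacent_topes
    {F : Type*} [NormedAddCommGroup F] [NormedSpace ℝ F] [FiniteDimensional ℝ F]
    {N : ℕ} (Φ : Fin N → F)
    (hne : ∀ i, Φ i ≠ 0)
    (hgen : Submodule.span ℝ (Set.range Φ) = ⊤)
    (hsal : ∃ a : F →ₗ[ℝ] ℝ, ∀ i, 0 < a (Φ i))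
    (τ₁ τ₂ : Set F) (H : Submodule ℝ F) (hadj : Adjacent Φ τ₁ τ₂ H)
    (hτ₁c : τ₁ ⊆ fullCone Φ)
    (K : Finset (Fin N)) (hK₁ : K ∈ Bases Φ τ₁) (hK₂ : K ∉ Bases Φ τ₂) :
    (∃ k₁ ∈ K, Φ k₁ ∉ H ∧ InOpenSideOf H τ₁ (Φ k₁) ∧
      ∀ k ∈ K, k ≠ k₁ → Φ k ∈ H) ∧
    (∀ τ₁₂ : Set ↥H,
      IsTope (fun i : {i : Fin N // Φ i ∈ H} => (⟨Φ i.1, i.2⟩ : ↥H)) τ₁₂ →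
      closure τ₁ ∩ closure τ₂ ⊆ Subtype.val '' closure τ₁₂ →
      ∀ k₁ ∈ K, Φ k₁ ∉ H →
        Subtype.val '' τ₁₂ ⊆ coneOf Φ (↑(K.erase k₁) : Set (Fin N))) :=
  basic_subsets_adjacent_topes_general Φ τ₁ τ₂ H hadj K hK₁ hK₂

end AC
end
end
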